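/- arXiv:0706.2955 — 5 statements merged into one kernel-verified Lean document; each statement's English description precedes it below -/
import Mathlib

section
/- Let A, B ∈ ℤ with 4A³ + 27B² ≠ 0, and let E be the elliptic curve over ℚ given by Y² = X³ + A·X + B. Then E has a rational point of order 5 if and only if there exist integers p, q with p ≠ 0 and q ≠ 0 such that A = −27(q⁴ − 12q³p + 14q²p² + 12p³q + p⁴) and B = 54(p² + q²)(q⁴ − 18q³p + 74q²p² + 18p³q + p⁴). -/
open WeierstrassCurve

namespace O5

private lemma some_congr {F : Type*} [Field F] {W : WeierstrassCurve.Affine F} {x y x' y' : F}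
    (h : W.Nonsingular x y) (hx : x = x') (hy : y = y') :
    ∃ h' : W.Nonsingular x' y', Affine.Point.some _ _ h = Affine.Point.some _ _ h' := by
  subst hx hy; exact ⟨h, rfl⟩


private lemma rev (A B : ℚ) (W : WeierstrassCurve.Affine ℚ) (hW : W = ⟨0, 0, 0, A, B⟩)
    (p q : ℚ) (hp : p ≠ 0) (hq : q ≠ 0)
    (hA : A = -27*(q^4-12*q^3*p+14*q^2*p^2+12*p^3*q+p^4))
    (hB : B = 54*(p^2+q^2)*(q^4-18*q^3*p+74*q^2*p^2+18*p^3*q+p^4)) :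
    ∃ P : W.Point, addOrderOf P = 5 := by
  have ha₁ : W.a₁ = 0 := by rw [hW]
  have ha₂ : W.a₂ = 0 := by rw [hW]
  have ha₃ : W.a₃ = 0 := by rw [hW]
  have ha₄ : W.a₄ = A := by rw [hW]
  have ha₆ : W.a₆ = B := by rw [hW]
  set x₁ : ℚ := 3*(p^2-6*p*q+q^2) with hx₁def
  set y₁ : ℚ := -108*p^2*q with hy₁def
  set x₂ : ℚ := 3*(p^2+6*p*q+q^2) with hx₂def
  set y₂ : ℚ := 108*p*q^2 with hy₂def
  have hy₁0 : y₁ ≠ 0 := by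
    rw [hy₁def]
    intro h
    rcases mul_eq_zero.mp h with h' | h'
    · rcases mul_eq_zero.mp h' with h'' | h''
      · norm_num at h''
      · exact hp (pow_eq_zero_iff two_ne_zero |>.mp h'')
    · exact hq h'
  have hy₂0 : y₂ ≠ 0 := by
    rw [hy₂def]
    intro h
    rcases mul_eq_zero.mp h with h' | h'
    · rcases mul_eq_zero.mp h' with h'' | h''
      · norm_num at h''
      · exact hp h''
    · exact hq (pow_eq_zero_iff two_ne_zero |>.mp h')
  have h₁ : W.Nonsingular x₁ y₁ := by
    rw [Affine.nonsingular_iff, Affine.equation_iff, ha₁, ha₂, ha₃, ha₄, ha₆, hA, hB]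
    constructor
    · ring
    · right
      intro h
      apply hy₁0
      have : (2:ℚ) * y₁ = 0 := by linear_combination h
      simpa using this
  -- negY facts
  have hneg : ∀ x y : ℚ, W.negY x y = -y := by
    intro x y; rw [Affine.negY, ha₁, ha₃]; ring
  have hy₁ne : y₁ ≠ W.negY x₁ y₁ := by
    rw [hneg]; intro h
    apply hy₁0
    have : (2:ℚ) * y₁ = 0 := by linear_combination h
    simpa using this
  -- slope at P
  have hs₁ : W.slope x₁ x₁ y₁ y₁ = (3*x₁^2 + A) / (2*y₁) := by
    rw [Affine.slope_of_Y_ne rfl hy₁ne, hneg, ha₁, ha₂, ha₄]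
    ring_nf
  -- 2P
  have hdouble : ∃ h₂ : W.Nonsingular x₂ y₂,
      Affine.Point.some _ _ h₁ + Affine.Point.some _ _ h₁ = Affine.Point.some _ _ h₂ := by
    rw [Affine.Point.add_self_of_Y_ne hy₁ne]
    apply some_congr
    · rw [Affine.addX, hs₁, ha₁, ha₂]
      simp only [hx₁def, hy₁def, hx₂def, hA]
      field_simp
      ring
    · rw [Affine.addY, Affine.negAddY, Affine.negY, Affine.addX, hs₁, ha₁, ha₂, ha₃]
      simp only [hx₁def, hy₁def, hx₂def, hy₂def, hA]
      field_simp
      ring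
  obtain ⟨h₂, h2P⟩ := hdouble
  have hy₂ne : y₂ ≠ W.negY x₂ y₂ := by
    rw [hneg]; intro h
    apply hy₂0
    have : (2:ℚ) * y₂ = 0 := by linear_combination h
    simpa using this
  have hs₂ : W.slope x₂ x₂ y₂ y₂ = (3*x₂^2 + A) / (2*y₂) := by
    rw [Affine.slope_of_Y_ne rfl hy₂ne, hneg, ha₁, ha₂, ha₄]
    ring_nf
  have hquad : ∃ h₄ : W.Nonsingular x₁ (-y₁),
      Affine.Point.some _ _ h₂ + Affine.Point.some _ _ h₂ = Affine.Point.some _ _ h₄ := by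
    rw [Affine.Point.add_self_of_Y_ne hy₂ne]
    apply some_congr
    · rw [Affine.addX, hs₂, ha₁, ha₂]
      simp only [hx₁def, hy₂def, hx₂def, hA]
      field_simp
      ring
    · rw [Affine.addY, Affine.negAddY, Affine.negY, Affine.addX, hs₂, ha₁, ha₂, ha₃]
      simp only [hx₁def, hy₁def, hx₂def, hy₂def, hA]
      field_simp
      ring
  obtain ⟨h₄, h4P⟩ := hquad
  have hnegP : Affine.Point.some _ _ h₄ = -Affine.Point.some _ _ h₁ := by
    rw [Affine.Point.neg_some]
    obtain ⟨h', he⟩ := some_congr ((Affine.nonsingular_neg ..).mpr h₁) rfl (hneg x₁ y₁)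
    rw [he]
  set P : W.Point := Affine.Point.some _ _ h₁ with hPdef
  have e2 : (2:ℕ) • P = Affine.Point.some _ _ h₂ := by rw [two_nsmul]; exact h2P
  have e4 : (4:ℕ) • P = Affine.Point.some _ _ h₄ := by
    rw [show (4:ℕ) = 2*2 from rfl, mul_nsmul, e2, two_nsmul]; exact h4P
  have h5 : (5:ℕ) • P = 0 := by
    rw [show (5:ℕ) = 4+1 from rfl, succ_nsmul, e4, hnegP, neg_add_cancel]
  haveI : Fact (Nat.Prime 5) := ⟨by norm_num⟩
  exact ⟨P, addOrderOf_eq_prime h5 (Affine.Point.some_ne_zero h₁)⟩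



private lemma fwd_rat (A B : ℚ) (W : WeierstrassCurve.Affine ℚ) (hW : W = ⟨0, 0, 0, A, B⟩)
    (P : W.Point) (hP : addOrderOf P = 5) :
    ∃ p q : ℚ, p ≠ 0 ∧ q ≠ 0 ∧
      A = -27*(q^4-12*q^3*p+14*q^2*p^2+12*p^3*q+p^4) ∧
      B = 54*(p^2+q^2)*(q^4-18*q^3*p+74*q^2*p^2+18*p^3*q+p^4) := by
  have ha₁ : W.a₁ = 0 := by rw [hW]
  have ha₂ : W.a₂ = 0 := by rw [hW]
  have ha₃ : W.a₃ = 0 := by rw [hW]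
  have ha₄ : W.a₄ = A := by rw [hW]
  have ha₆ : W.a₆ = B := by rw [hW]
  have hneg : ∀ x y : ℚ, W.negY x y = -y := by
    intro x y; rw [Affine.negY, ha₁, ha₃]; ring
  -- order facts
  have hdvd : ∀ n : ℕ, n • P = 0 → (5 : ℕ) ∣ n := by
    intro n hn
    rw [← hP]
    exact addOrderOf_dvd_of_nsmul_eq_zero hn
  have h5 : (5:ℕ) • P = 0 := by rw [← hP]; exact addOrderOf_nsmul_eq_zero P
  have hPne : P ≠ 0 := by
    intro h; rw [h, addOrderOf_zero] at hP; norm_num at hP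
  obtain _ | @⟨a, b, h₁⟩ := P
  · exact absurd rfl hPne
  · -- P = some h₁ with coordinates (a, b)
    have e₁ : b^2 = a^3 + A*a + B := by
      have := (Affine.equation_iff _ _).mp h₁.1
      rw [ha₁, ha₂, ha₃, ha₄, ha₆] at this
      linear_combination this
    have hb : b ≠ 0 := by
      intro hb0
      have hyeq : b = W.negY a b := by rw [hneg, hb0]; ring
      have h2 : (2:ℕ) • Affine.Point.some _ _ h₁ = 0 := by
        rw [two_nsmul]; exact Affine.Point.add_self_of_Y_eq hyeq
      exact absurd (hdvd 2 h2) (by norm_num)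
    have hy₁ne : b ≠ W.negY a b := by
      rw [hneg]; intro h
      exact hb (by linarith [h])
    set L : ℚ := W.slope a a b b with hLdef
    have hL2b : 2*b*L = 3*a^2 + A := by
      rw [hLdef, Affine.slope_of_Y_ne rfl hy₁ne, hneg, ha₁, ha₂, ha₄]
      field_simp
      ring
    set c : ℚ := W.addX a a L with hcdef
    set d : ℚ := W.addY a a b L with hddef
    have hc : c = L^2 - 2*a := by rw [hcdef, Affine.addX, ha₁, ha₂]; ring
    have hd : d = -(L*(c-a)+b) := by
      rw [hddef, Affine.addY, Affine.negAddY, Affine.negY, ha₁, ha₃, ← hcdef]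
      ring
    have h₂ : W.Nonsingular c d := Affine.nonsingular_add h₁ h₁ (fun h => hy₁ne h.2)
    have h2P : Affine.Point.some _ _ h₁ + Affine.Point.some _ _ h₁ = Affine.Point.some _ _ h₂ :=
      Affine.Point.add_self_of_Y_ne hy₁ne
    have e2n : (2:ℕ) • Affine.Point.some _ _ h₁ = Affine.Point.some _ _ h₂ := by
      rw [two_nsmul]; exact h2P
    have e₂ : d^2 = c^3 + A*c + B := by
      have := (Affine.equation_iff _ _).mp h₂.1
      rw [ha₁, ha₂, ha₃, ha₄, ha₆] at this
      linear_combination this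
    have hd0 : d ≠ 0 := by
      intro hd0
      have hyeq : d = W.negY c d := by rw [hneg, hd0]; ring
      have h4 : (4:ℕ) • Affine.Point.some _ _ h₁ = 0 := by
        rw [show (4:ℕ) = 2*2 from rfl, mul_nsmul, e2n, two_nsmul]
        exact Affine.Point.add_self_of_Y_eq hyeq
      exact absurd (hdvd 4 h4) (by norm_num)
    -- c ≠ a
    have hca : c ≠ a := by
      intro hca
      have hbd : (d - b)*(d + b) = 0 := by
        linear_combination e₂ - e₁ + (c^2 + c*a + a^2 + A)*hca
      rcases mul_eq_zero.mp hbd with h' | h'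
      · -- d = b : 2P = P
        have hdb : d = b := by linarith [h']
        obtain ⟨h', heq⟩ := some_congr h₂ hca hdb
        have : Affine.Point.some _ _ h₁ + Affine.Point.some _ _ h₁ = Affine.Point.some _ _ h₁ := by
          rw [h2P, heq]
        exact hPne (add_eq_left.mp this)
      · -- d = -b : 3P = 0
        have hdb : d = W.negY a b := by rw [hneg]; linarith [h']
        have h3 : (3:ℕ) • Affine.Point.some _ _ h₁ = 0 := by
          rw [show (3:ℕ) = 2+1 from rfl, succ_nsmul, e2n]
          exact Affine.Point.add_of_Y_eq hca hdb
        exact absurd (hdvd 3 h3) (by norm_num)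
    have hy₂ne : d ≠ W.negY c d := by
      rw [hneg]; intro h
      exact hd0 (by linarith [h])
    set M : ℚ := W.slope c c d d with hMdef
    have hM2d : 2*d*M = 3*c^2 + A := by
      rw [hMdef, Affine.slope_of_Y_ne rfl hy₂ne, hneg, ha₁, ha₂, ha₄]
      field_simp
      ring
    -- 4P = -P
    have h45 : Affine.Point.some _ _ (Affine.nonsingular_add h₂ h₂ (fun h => hy₂ne h.2)) =
        Affine.Point.some _ _ ((Affine.nonsingular_neg ..).mpr h₁) := by
      have h4eq : (4:ℕ) • Affine.Point.some _ _ h₁ =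
          Affine.Point.some _ _ (Affine.nonsingular_add h₂ h₂ (fun h => hy₂ne h.2)) := by
        rw [show (4:ℕ) = 2*2 from rfl, mul_nsmul, e2n, two_nsmul]
        exact Affine.Point.add_self_of_Y_ne hy₂ne
      have : (4:ℕ) • Affine.Point.some _ _ h₁ = -Affine.Point.some _ _ h₁ := by
        apply eq_neg_of_add_eq_zero_left
        rw [← succ_nsmul]
        exact h5
      rw [h4eq, Affine.Point.neg_some] at this
      exact this
    injection h45 with hx4 hy4'
    -- turn coordinate equalities into algebraic ones
    rw [← hMdef, Affine.addX, ha₁, ha₂] at hx4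
    rw [← hMdef, Affine.addY, Affine.negAddY, Affine.addX, Affine.negY, Affine.negY,
      ha₁, ha₂, ha₃] at hy4'
    -- hx4 : M^2 + 0*M - 0 - c - c = a ; hy4' : -(M*(...) + d) - 0 - 0 = -b - 0*a - 0
    have hM2 : M^2 = a + 2*c := by linear_combination hx4
    have hMy : M*(a - c) + d = b := by linear_combination -hy4' - M*hx4
    have hL2 : L^2 = c + 2*a := by linear_combination -hc
    clear_value L M c d
    have hs : c - a ≠ 0 := sub_ne_zero.mpr hca
    set p : ℚ := -b/(3*(c-a)) with hpdef
    set q : ℚ := d/(3*(c-a)) with hqdef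
    have h3s : (3:ℚ)*(c-a) ≠ 0 := mul_ne_zero three_ne_zero hs
    have hp0 : p ≠ 0 := by rw [hpdef]; exact div_ne_zero (neg_ne_zero.mpr hb) h3s
    have hq0 : q ≠ 0 := by rw [hqdef]; exact div_ne_zero hd0 h3s
    clear_value p q
    have hbp : b = -3*p*(c-a) := by rw [hpdef]; field_simp
    have hdq : d = 3*q*(c-a) := by rw [hqdef]; field_simp
    have h1 : L*(c-a) = -(b+d) := by linear_combination hd
    have hM1 : M*(c-a) = d - b := by linear_combination -hMy
    have i1 : (b+d)^2 = (c+2*a)*(c-a)^2 := by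
      have h2 := congrArg (·^2) h1
      linear_combination -h2 + (c-a)^2*hL2
    have i2 : (d-b)^2 = (a+2*c)*(c-a)^2 := by
      have h2 := congrArg (·^2) hM1
      linear_combination -h2 + (c-a)^2*hM2
    have hsub : 4*b*d = -(c-a)^3 := by linear_combination i1 - i2
    have hbd : 4*b*d = -36*p*q*(c-a)^2 := by rw [hbp, hdq]; ring
    have hspq : c - a = 36*p*q := by
      have h0 : (c-a)^2*((c-a) - 36*p*q) = 0 := by linear_combination hsub - hbd
      rcases mul_eq_zero.mp h0 with h' | h'
      · exact absurd (pow_eq_zero_iff two_ne_zero |>.mp h') hs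
      · linarith [sub_eq_zero.mp h']
    have hb' : b = -108*p^2*q := by rw [hbp, hspq]; ring
    have hd' : d = 108*p*q^2 := by rw [hdq, hspq]; ring
    have ha3 : 3*a*(c-a)^2 = 2*(b+d)^2 - (d-b)^2 := by linear_combination i2 - 2*i1
    rw [hspq, hb', hd'] at ha3
    have hpq2 : (3888:ℚ)*p^2*q^2 ≠ 0 := by positivity
    have ha' : a = 3*(p^2-6*p*q+q^2) := by
      have h0 : (3888*p^2*q^2)*(a - 3*(p^2-6*p*q+q^2)) = 0 := by linear_combination ha3
      rcases mul_eq_zero.mp h0 with h' | h'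
      · exact absurd h' hpq2
      · linarith [sub_eq_zero.mp h']
    rw [hspq, hb', hd'] at h1
    have hpq1 : (36:ℚ)*p*q ≠ 0 := by
      intro h; rcases mul_eq_zero.mp h with h' | h'
      · rcases mul_eq_zero.mp h' with h'' | h''
        · norm_num at h''
        · exact hp0 h''
      · exact hq0 h'
    have hL' : L = 3*(p-q) := by
      have h0 : (36*p*q)*(L - 3*(p-q)) = 0 := by linear_combination h1
      rcases mul_eq_zero.mp h0 with h' | h'
      · exact absurd h' hpq1
      · linarith [sub_eq_zero.mp h']
    rw [hb', hL', ha'] at hL2b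
    have hAfinal : A = -27*(q^4-12*q^3*p+14*q^2*p^2+12*p^3*q+p^4) := by
      linear_combination -hL2b
    rw [hb', ha'] at e₁
    have hBfinal : B = 54*(p^2+q^2)*(q^4-18*q^3*p+74*q^2*p^2+18*p^3*q+p^4) := by
      linear_combination -e₁ - 3*(p^2-6*p*q+q^2)*hAfinal
    exact ⟨p, q, hp0, hq0, hAfinal, hBfinal⟩



private def FZ (m n : ℤ) : ℤ := n^4-12*n^3*m+14*n^2*m^2+12*m^3*n+m^4
private def GZ (m n : ℤ) : ℤ := n^4-18*n^3*m+74*n^2*m^2+18*m^3*n+m^4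

private lemma zdvd_iff (k m : ℕ) (hk : (k:ℤ) ≠ 0) (a : ℤ) :
    (m:ℤ) ∣ a ↔ ((k : ZMod (k*m)) * (a : ZMod (k*m)) = 0) := by
  have h1 : ((k : ZMod (k*m)) * (a : ZMod (k*m))) = (((k:ℤ)*a : ℤ) : ZMod (k*m)) := by
    push_cast; ring
  rw [h1, ZMod.intCast_zmod_eq_zero_iff_dvd]
  have h2 : ((k*m : ℕ) : ℤ) = (k:ℤ) * (m:ℤ) := by push_cast; ring
  rw [h2, mul_dvd_mul_iff_left hk]

private lemma dec3 : ∀ x y : ZMod 3,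
    (y^4-12*y^3*x+14*y^2*x^2+12*x^3*y+x^4 = 0) → (x = 0 ∧ y = 0) := by decide

private lemma dec2 : ∀ x y : ZMod 16,
    (8*(y^4-12*y^3*x+14*y^2*x^2+12*x^3*y+x^4) = 0) →
    ((x^2+y^2)*(y^4-18*y^3*x+74*y^2*x^2+18*x^3*y+x^4) = 0) →
    (8*x = 0 ∧ 8*y = 0) := by decide

private lemma dec5 : ∀ x y : ZMod 25,
    ((y^4-12*y^3*x+14*y^2*x^2+12*x^3*y+x^4) = 0) →
    (5*((x^2+y^2)*(y^4-18*y^3*x+74*y^2*x^2+18*x^3*y+x^4)) = 0) →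
    (5*x = 0 ∧ 5*y = 0) := by decide

private lemma int_descent (A B : ℤ) (p q : ℚ) (hp : p ≠ 0) (hq : q ≠ 0)
    (hA : (A:ℚ) = -27*(q^4-12*q^3*p+14*q^2*p^2+12*p^3*q+p^4))
    (hB : (B:ℚ) = 54*(p^2+q^2)*(q^4-18*q^3*p+74*q^2*p^2+18*p^3*q+p^4)) :
    ∃ m n : ℤ, m ≠ 0 ∧ n ≠ 0 ∧
      A = -27*(n^4-12*n^3*m+14*n^2*m^2+12*m^3*n+m^4) ∧
      B = 54*(m^2+n^2)*(n^4-18*n^3*m+74*n^2*m^2+18*m^3*n+m^4) := by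
  set δ : ℕ := Nat.lcm p.den q.den with hδdef
  have hpden : p.den ≠ 0 := p.den_nz
  have hqden : q.den ≠ 0 := q.den_nz
  have hδ0 : δ ≠ 0 := Nat.lcm_ne_zero hpden hqden
  have hδpos : 0 < δ := Nat.pos_of_ne_zero hδ0
  have hd1δ : p.den ∣ δ := Nat.dvd_lcm_left _ _
  have hd2δ : q.den ∣ δ := Nat.dvd_lcm_right _ _
  set α : ℤ := p.num * ((δ / p.den : ℕ) : ℤ) with hαdef
  set β : ℤ := q.num * ((δ / q.den : ℕ) : ℤ) with hβdef
  have hpd0 : (p.den : ℚ) ≠ 0 := by exact_mod_cast hpden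
  have hqd0 : (q.den : ℚ) ≠ 0 := by exact_mod_cast hqden
  have hpnum : (p.num : ℚ) = p * p.den := by
    have h := Rat.num_div_den p
    rw [div_eq_iff hpd0] at h
    exact h
  have hqnum : (q.num : ℚ) = q * q.den := by
    have h := Rat.num_div_den q
    rw [div_eq_iff hqd0] at h
    exact h
  have hdiv1 : ((δ / p.den : ℕ) : ℚ) * (p.den : ℚ) = (δ : ℚ) := by
    rw [← Nat.cast_mul, Nat.div_mul_cancel hd1δ]
  have hdiv2 : ((δ / q.den : ℕ) : ℚ) * (q.den : ℚ) = (δ : ℚ) := by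
    rw [← Nat.cast_mul, Nat.div_mul_cancel hd2δ]
  have hαq : (α : ℚ) = p * δ := by
    rw [hαdef, Int.cast_mul, Int.cast_natCast, hpnum, mul_assoc, mul_comm ((p.den:ℚ)) _, hdiv1]
  have hβq : (β : ℚ) = q * δ := by
    rw [hβdef, Int.cast_mul, Int.cast_natCast, hqnum, mul_assoc, mul_comm ((q.den:ℚ)) _, hdiv2]
  -- integer versions of the equations
  have hAZ : A * (δ:ℤ)^4 = -27 * FZ α β := by
    have : ((A * (δ:ℤ)^4 : ℤ) : ℚ) = ((-27 * FZ α β : ℤ) : ℚ) := by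
      push_cast [FZ]
      rw [hαq, hβq, hA]
      ring
    exact_mod_cast this
  have hBZ : B * (δ:ℤ)^6 = 54 * (α^2+β^2) * GZ α β := by
    have : ((B * (δ:ℤ)^6 : ℤ) : ℚ) = ((54 * (α^2+β^2) * GZ α β : ℤ) : ℚ) := by
      push_cast [GZ]
      rw [hαq, hβq, hB]
      ring
    exact_mod_cast this
  -- no prime divides δ
  have hprime : ∀ l : ℕ, l.Prime → l ∣ δ → False := by
    intro l hl hlδ
    have hlZ : Prime (l : ℤ) := Nat.prime_iff_prime_int.mp hl
    have hnotboth : ¬ ((l:ℤ) ∣ α ∧ (l:ℤ) ∣ β) := by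
      rintro ⟨h1, h2⟩
      have key : ∀ r : ℚ, r.den ∣ δ → (l:ℤ) ∣ r.num * ((δ / r.den : ℕ) : ℤ) →
          l * r.den ∣ δ := by
        intro r hr hdvd
        rcases hlZ.dvd_mul.mp hdvd with h' | h'
        · have hnum : l ∣ r.num.natAbs := by
            rw [← Int.natAbs_natCast l]
            exact Int.natAbs_dvd_natAbs.mpr h'
          have hld : ¬ l ∣ r.den := by
            intro hld
            have hg : l ∣ Nat.gcd r.num.natAbs r.den := Nat.dvd_gcd hnum hld
            rw [r.reduced] at hg
            exact hl.one_lt.ne' (Nat.dvd_one.mp hg)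
          exact ((Nat.Prime.coprime_iff_not_dvd hl).mpr hld).mul_dvd_of_dvd_of_dvd hlδ hr
        · have h'' : l ∣ δ / r.den := Int.natCast_dvd_natCast.mp h'
          have h3 : l * r.den ∣ (δ / r.den) * r.den := mul_dvd_mul h'' dvd_rfl
          rwa [Nat.div_mul_cancel hr] at h3
      have h1' : l * p.den ∣ δ := key p hd1δ (hαdef ▸ h1)
      have h2' : l * q.den ∣ δ := key q hd2δ (hβdef ▸ h2)
      have hlcm : Nat.lcm (l * p.den) (l * q.den) ∣ δ := Nat.lcm_dvd h1' h2'
      rw [Nat.lcm_mul_left, ← hδdef] at hlcm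
      have hle := Nat.le_of_dvd hδpos hlcm
      nlinarith [hl.two_le, hδpos]
    -- divisibility conditions
    have hlδZ : (l:ℤ) ∣ (δ:ℤ) := Int.natCast_dvd_natCast.mpr hlδ
    have hl4 : (l:ℤ)^4 ∣ 27 * FZ α β := by
      have h1 : (l:ℤ)^4 ∣ A * (δ:ℤ)^4 := Dvd.dvd.mul_left (pow_dvd_pow_of_dvd hlδZ 4) A
      rw [hAZ] at h1
      rw [show (-27 : ℤ) * FZ α β = -(27 * FZ α β) by ring] at h1
      exact (dvd_neg).mp h1
    have hl6 : (l:ℤ)^6 ∣ 54 * ((α^2+β^2) * GZ α β) := by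
      have h1 : (l:ℤ)^6 ∣ B * (δ:ℤ)^6 := Dvd.dvd.mul_left (pow_dvd_pow_of_dvd hlδZ 6) B
      rw [hBZ, mul_assoc] at h1
      exact h1
    by_cases hl2 : l = 2
    · -- l = 2 : use dec2 over ZMod 16
      subst hl2
      have hl4' : (16:ℤ) ∣ 27 * FZ α β := by
        have h := hl4; push_cast at h; exact h
      have hl6' : (64:ℤ) ∣ 54 * ((α^2+β^2) * GZ α β) := by
        have h := hl6; push_cast at h; exact h
      have hF2 : (2:ℤ) ∣ FZ α β := by
        have h16 : (2:ℤ) ∣ 27 * FZ α β := dvd_trans ⟨8, by ring⟩ hl4'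
        rcases (Int.prime_two).dvd_mul.mp h16 with h' | h'
        · norm_num at h'
        · exact h'
      have hH16 : (16:ℤ) ∣ (α^2+β^2) * GZ α β := by
        have h64 : (64:ℤ) ∣ 54 * ((α^2+β^2) * GZ α β) := hl6'
        have h32 : (32:ℤ) ∣ 27 * ((α^2+β^2) * GZ α β) := by
          rcases h64 with ⟨c, hc⟩
          exact ⟨c, by linarith⟩
        have hcop : IsCoprime (32:ℤ) 27 := by
          rw [Int.isCoprime_iff_gcd_eq_one]; norm_num
        exact dvd_trans ⟨2, by ring⟩ (hcop.dvd_of_dvd_mul_left h32)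
      -- transfer to ZMod 16
      have hF' : (8 : ZMod 16) * ((FZ α β : ℤ) : ZMod 16) = 0 := by
        have := (zdvd_iff 8 2 (by norm_num) (FZ α β)).mp hF2
        exact_mod_cast this
      have hH' : (((α^2+β^2) * GZ α β : ℤ) : ZMod 16) = 0 := by
        rw [ZMod.intCast_zmod_eq_zero_iff_dvd]
        exact_mod_cast hH16
      push_cast [FZ] at hF'
      push_cast [FZ, GZ] at hH'
      obtain ⟨hx0, hy0⟩ := dec2 ((α : ZMod 16)) ((β : ZMod 16)) (by linear_combination hF')
        (by linear_combination hH')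
      have hxd : (2:ℤ) ∣ α := by
        apply (zdvd_iff 8 2 (by norm_num) α).mpr
        exact_mod_cast hx0
      have hyd : (2:ℤ) ∣ β := by
        apply (zdvd_iff 8 2 (by norm_num) β).mpr
        exact_mod_cast hy0
      exact hnotboth ⟨by exact_mod_cast hxd, by exact_mod_cast hyd⟩
    · by_cases hl3 : l = 3
      · -- l = 3 : use dec3 over ZMod 3
        subst hl3
        have hF3 : (3:ℤ) ∣ FZ α β := by
          have h81 : (81:ℤ) ∣ 27 * FZ α β := by
            have h := hl4; push_cast at h; exact h
          rcases h81 with ⟨c, hc⟩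
          exact ⟨c, by linarith⟩
        have hF' : ((FZ α β : ℤ) : ZMod 3) = 0 := by
          rw [ZMod.intCast_zmod_eq_zero_iff_dvd]
          exact_mod_cast hF3
        push_cast [FZ] at hF'
        obtain ⟨hx0, hy0⟩ := dec3 ((α : ZMod 3)) ((β : ZMod 3)) (by linear_combination hF')
        have hxd : ((3:ℕ):ℤ) ∣ α := by
          rw [← ZMod.intCast_zmod_eq_zero_iff_dvd] at *
          exact_mod_cast hx0
        have hyd : ((3:ℕ):ℤ) ∣ β := by
          rw [← ZMod.intCast_zmod_eq_zero_iff_dvd] at *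
          exact_mod_cast hy0
        exact hnotboth ⟨hxd, hyd⟩
      · by_cases hl5 : l = 5
        · -- l = 5 : use dec5 over ZMod 25
          subst hl5
          have hF25 : (25:ℤ) ∣ FZ α β := by
            have h625 : (625:ℤ) ∣ 27 * FZ α β := by
              have h := hl4; push_cast at h; exact h
            have hcop : IsCoprime (625:ℤ) 27 := by
              rw [Int.isCoprime_iff_gcd_eq_one]; norm_num
            exact dvd_trans ⟨25, by ring⟩ (hcop.dvd_of_dvd_mul_left h625)
          have hH5 : (5:ℤ) ∣ (α^2+β^2) * GZ α β := by
            have hl6' : (15625:ℤ) ∣ 54 * ((α^2+β^2) * GZ α β) := by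
              have h := hl6; push_cast at h; exact h
            have h5 : (5:ℤ) ∣ 54 * ((α^2+β^2) * GZ α β) :=
              dvd_trans ⟨3125, by ring⟩ hl6'
            rcases (Int.prime_iff_natAbs_prime.mpr (by norm_num)).dvd_mul.mp h5 with h' | h'
            · norm_num at h'
            · exact h'
          have hF' : ((FZ α β : ℤ) : ZMod 25) = 0 := by
            rw [ZMod.intCast_zmod_eq_zero_iff_dvd]
            exact_mod_cast hF25
          have hH' : (5 : ZMod 25) * (((α^2+β^2) * GZ α β : ℤ) : ZMod 25) = 0 := by
            have := (zdvd_iff 5 5 (by norm_num) _).mp hH5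
            exact_mod_cast this
          push_cast [FZ] at hF'
          push_cast [FZ, GZ] at hH'
          obtain ⟨hx0, hy0⟩ := dec5 ((α : ZMod 25)) ((β : ZMod 25)) (by linear_combination hF')
            (by linear_combination hH')
          have hxd : (5:ℤ) ∣ α := by
            apply (zdvd_iff 5 5 (by norm_num) α).mpr
            exact_mod_cast hx0
          have hyd : (5:ℤ) ∣ β := by
            apply (zdvd_iff 5 5 (by norm_num) β).mpr
            exact_mod_cast hy0
          exact hnotboth ⟨by exact_mod_cast hxd, by exact_mod_cast hyd⟩
        · -- l ∉ {2,3,5}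
          have hld2 : ¬ (l:ℤ) ∣ 2 := fun h => hl2
            ((Nat.prime_dvd_prime_iff_eq hl (by norm_num)).mp
              (Int.natCast_dvd_natCast.mp (by exact_mod_cast h)))
          have hld3 : ¬ (l:ℤ) ∣ 3 := fun h => hl3
            ((Nat.prime_dvd_prime_iff_eq hl (by norm_num)).mp
              (Int.natCast_dvd_natCast.mp (by exact_mod_cast h)))
          have hld5 : ¬ (l:ℤ) ∣ 5 := fun h => hl5
            ((Nat.prime_dvd_prime_iff_eq hl (by norm_num)).mp
              (Int.natCast_dvd_natCast.mp (by exact_mod_cast h)))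
          have hF : (l:ℤ) ∣ FZ α β := by
            have h1 : (l:ℤ) ∣ 27 * FZ α β := dvd_trans (dvd_pow_self _ (by norm_num)) hl4
            rcases hlZ.dvd_mul.mp h1 with h' | h'
            · exact absurd (hlZ.dvd_of_dvd_pow (show (l:ℤ) ∣ 3^3 by norm_num; exact h')) hld3
            · exact h'
          have hH : (l:ℤ) ∣ (α^2+β^2) * GZ α β := by
            have h1 : (l:ℤ) ∣ 54 * ((α^2+β^2) * GZ α β) :=
              dvd_trans (dvd_pow_self _ (by norm_num)) hl6
            rcases hlZ.dvd_mul.mp h1 with h' | h'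
            · rcases hlZ.dvd_mul.mp (show (l:ℤ) ∣ 2 * 27 by norm_num; exact h') with h'' | h''
              · exact absurd h'' hld2
              · exact absurd (hlZ.dvd_of_dvd_pow (show (l:ℤ) ∣ 3^3 by norm_num; exact h'')) hld3
            · exact h'
          have hid : ((α^2+β^2) * GZ α β)^2 - (FZ α β)^3 =
              -(1728*(α^5*(β^5*(β^2 - 11*α*β - α^2)))) := by
            simp only [FZ, GZ]; ring
          have hdvd1728 : (l:ℤ) ∣ 1728*(α^5*(β^5*(β^2 - 11*α*β - α^2))) := by
            rw [← dvd_neg, ← hid]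
            exact dvd_sub (hH.pow two_ne_zero) (hF.pow three_ne_zero)
          have hnd1728 : ¬ (l:ℤ) ∣ 1728 := by
            intro h
            rcases hlZ.dvd_mul.mp (show (l:ℤ) ∣ 2^6 * 3^3 by norm_num; exact h) with h' | h'
            · exact absurd (hlZ.dvd_of_dvd_pow h') hld2
            · exact absurd (hlZ.dvd_of_dvd_pow h') hld3
          have hmain : (l:ℤ) ∣ α^5*(β^5*(β^2 - 11*α*β - α^2)) := by
            rcases hlZ.dvd_mul.mp hdvd1728 with h' | h'
            · exact absurd h' hnd1728
            · exact h'
          have hdvdα : (l:ℤ) ∣ α → False := by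
            intro hα
            have hβ4 : (l:ℤ) ∣ β^4 := by
              have hid2 : β^4 = FZ α β - α*(-12*β^3+14*α*β^2+12*α^2*β+α^3) := by
                simp only [FZ]; ring
              rw [hid2]
              exact dvd_sub hF (hα.mul_right _)
            exact hnotboth ⟨hα, hlZ.dvd_of_dvd_pow hβ4⟩
          have hdvdβ : (l:ℤ) ∣ β → False := by
            intro hβ
            have hα4 : (l:ℤ) ∣ α^4 := by
              have hid2 : α^4 = FZ α β - β*(β^3-12*α*β^2+14*α^2*β+12*α^3) := by
                simp only [FZ]; ring
              rw [hid2]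
              exact dvd_sub hF (hβ.mul_right _)
            exact hnotboth ⟨hlZ.dvd_of_dvd_pow hα4, hβ⟩
          rcases hlZ.dvd_mul.mp hmain with h' | h'
          · exact hdvdα (hlZ.dvd_of_dvd_pow h')
          · rcases hlZ.dvd_mul.mp h' with h'' | h''
            · exact hdvdβ (hlZ.dvd_of_dvd_pow h'')
            · -- l ∣ E
              set E : ℤ := β^2 - 11*α*β - α^2 with hEdef
              have hFEQ : FZ α β = E*(β^2-α*β+4*α^2) + 5*(α^3*(α+11*β)) := by
                simp only [FZ, hEdef]; ring
              have h5x : (l:ℤ) ∣ 5*(α^3*(α+11*β)) := by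
                rw [show (5:ℤ)*(α^3*(α+11*β)) = FZ α β - E*(β^2-α*β+4*α^2) by rw [hFEQ]; ring]
                exact dvd_sub hF (h''.mul_right _)
              rcases hlZ.dvd_mul.mp h5x with h5 | h5
              · exact absurd h5 hld5
              · rcases hlZ.dvd_mul.mp h5 with h6 | h6
                · -- l ∣ α
                  apply hdvdα (hlZ.dvd_of_dvd_pow h6)
                · -- l ∣ α + 11β
                  have hβ2 : (l:ℤ) ∣ β^2 := by
                    have hid3 : β^2 = E - 11*β*(α+11*β) + (α+11*β)^2 := by
                      rw [hEdef]; ring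
                    rw [hid3]
                    exact dvd_add (dvd_sub h'' (h6.mul_left _)) (dvd_pow h6 two_ne_zero)
                  have hβd : (l:ℤ) ∣ β := hlZ.dvd_of_dvd_pow hβ2
                  have hαd : (l:ℤ) ∣ α := by
                    have : α = (α+11*β) - 11*β := by ring
                    rw [this]
                    exact dvd_sub h6 (hβd.mul_left _)
                  exact hnotboth ⟨hαd, hβd⟩
  -- δ = 1
  have hδ1 : δ = 1 := by
    by_contra h
    obtain ⟨l, hlp, hld⟩ := Nat.exists_prime_and_dvd h
    exact hprime l hlp hld
  have hpden1 : p.den = 1 := Nat.dvd_one.mp (hδ1 ▸ hd1δ)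
  have hqden1 : q.den = 1 := Nat.dvd_one.mp (hδ1 ▸ hd2δ)
  have hpint : (p.num : ℚ) = p := by rw [hpnum, hpden1]; simp
  have hqint : (q.num : ℚ) = q := by rw [hqnum, hqden1]; simp
  refine ⟨p.num, q.num, Rat.num_ne_zero.mpr hp, Rat.num_ne_zero.mpr hq, ?_, ?_⟩
  · have : (A:ℚ) = -27*((q.num:ℚ)^4-12*(q.num:ℚ)^3*(p.num:ℚ)+14*(q.num:ℚ)^2*(p.num:ℚ)^2
        +12*(p.num:ℚ)^3*(q.num:ℚ)+(p.num:ℚ)^4) := by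
      rw [hpint, hqint]; exact hA
    exact_mod_cast this
  · have : (B:ℚ) = 54*((p.num:ℚ)^2+(q.num:ℚ)^2)*((q.num:ℚ)^4-18*(q.num:ℚ)^3*(p.num:ℚ)
        +74*(q.num:ℚ)^2*(p.num:ℚ)^2+18*(p.num:ℚ)^3*(q.num:ℚ)+(p.num:ℚ)^4) := by
      rw [hpint, hqint]; exact hB
    exact_mod_cast this


end O5

theorem order_five_characterization (A B : ℤ)
    (hΔ : 4 * A ^ 3 + 27 * B ^ 2 ≠ 0)
    (W : WeierstrassCurve.Affine ℚ) (hW : W = ⟨0, 0, 0, (A : ℚ), (B : ℚ)⟩) :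
    (∃ P : W.Point, addOrderOf P = 5) ↔
      ∃ p q : ℤ, p ≠ 0 ∧ q ≠ 0 ∧
        A = -27 * (q ^ 4 - 12 * q ^ 3 * p + 14 * q ^ 2 * p ^ 2 + 12 * p ^ 3 * q + p ^ 4) ∧
        B = 54 * (p ^ 2 + q ^ 2) *
          (q ^ 4 - 18 * q ^ 3 * p + 74 * q ^ 2 * p ^ 2 + 18 * p ^ 3 * q + p ^ 4) := by
  constructor
  · rintro ⟨P, hP⟩
    obtain ⟨p, q, hp, hq, hA, hB⟩ := O5.fwd_rat (A:ℚ) (B:ℚ) W hW P hP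
    obtain ⟨m, n, hm, hn, hA', hB'⟩ := O5.int_descent A B p q hp hq hA hB
    exact ⟨m, n, hm, hn, by linarith [hA'], by linarith [hB']⟩
  · rintro ⟨p, q, hp, hq, hA, hB⟩
    apply O5.rev (A:ℚ) (B:ℚ) W hW (p:ℚ) (q:ℚ)
      (by exact_mod_cast hp) (by exact_mod_cast hq)
    · exact_mod_cast hA
    · exact_mod_cast hB
end

section
/- Let p, q be nonzero integers with p ≠ q, let k ∈ {1, 1/3} ⊆ ℚ, set A = −27k⁴(q³ − 3p²q + p³)(q⁹ − 9q⁷p² + 27q⁶p³ − 45q⁵p⁴ + 54q⁴p⁵ − 48q³p⁶ + 27p⁷q² − 9p⁸q + p⁹) and B = 54k⁶(p¹⁸ − 18p¹⁷q + 135p¹⁶q² − 570p¹⁵q³ + 1557p¹⁴q⁴ − 2970p¹³q⁵ + 4128p¹²q⁶ − 4230p¹¹q⁷ + 3240p¹⁰q⁸ − 2032p⁹q⁹ + 1359p⁸q¹⁰ − 1080p⁷q¹¹ + 735p⁶q¹² − 306p⁵q¹³ + 27p⁴q¹⁴ + 42p³q¹⁵ − 18p²q¹⁶ + q¹⁸),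 and assume 4A³ + 27B² ≠ 0. Then the set of rational points of order 9 on the curve E : Y² = X³ + A·X + B is exactly the set of six affine points (3k²(p⁶ + 6p⁵q − 15p⁴q² + 14p³q³ − 6p²q⁴ + q⁶), ±108k³p⁴q(p⁴ − 3p³q + 4p²q² − 3pq³ + q⁴)), (3k²(p⁶ − 6p⁵q + 21p⁴q² − 34p³q³ + 30p²q⁴ − 12pq⁵ + q⁶), ±108k³pq²(p⁶ − 5p⁵q + 11p⁴q² − 14p³q³ + 11p²q⁴ − 5pq⁵ + q⁶)), (3k²(p⁶ − 6p⁵q + 9p⁴q² − 10p³q³ + 6p²q⁴ + q⁶), ±108k³p²q⁴(p³ − 2p²q + 2pq² − q³)). -/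
open WeierstrassCurve

set_option maxHeartbeats 1600000

section OrderNineAux

open WeierstrassCurve Affine Affine.Point

private lemma ont_some_eq {W : WeierstrassCurve.Affine ℚ} {x₁ y₁ x₂ y₂ : ℚ}
    (h₁ : W.Nonsingular x₁ y₁) (h₂ : W.Nonsingular x₂ y₂) (hx : x₁ = x₂) (hy : y₁ = y₂) :
    Point.some _ _ h₁ = Point.some _ _ h₂ := by
  subst hx; subst hy; rfl

private lemma ont_xy_eq {W : WeierstrassCurve.Affine ℚ} {x₁ y₁ x₂ y₂ : ℚ}
    {h₁ : W.Nonsingular x₁ y₁} {h₂ : W.Nonsingular x₂ y₂}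
    (h : Point.some _ _ h₁ = Point.some _ _ h₂) : x₁ = x₂ ∧ y₁ = y₂ := by
  injection h with hx hy
  exact ⟨hx, hy⟩

private lemma ont_same_x {W : WeierstrassCurve.Affine ℚ} {x₁ y₁ x₂ y₂ : ℚ}
    (h₁ : W.Nonsingular x₁ y₁) (h₂ : W.Nonsingular x₂ y₂) (hx : x₁ = x₂) :
    Point.some _ _ h₁ = Point.some _ _ h₂ ∨ Point.some _ _ h₁ = -Point.some _ _ h₂ := by
  rcases Affine.Y_eq_of_X_eq h₁.1 h₂.1 hx with hy | hy
  · exact Or.inl (ont_some_eq h₁ h₂ hx hy)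
  · right; rw [Point.neg_some]; exact ont_some_eq _ _ hx hy

private lemma ont_negY (A B : ℚ) {W : WeierstrassCurve.Affine ℚ}
    (ha1 : W.a₁ = 0) (ha3 : W.a₃ = 0) (x y : ℚ) : W.negY x y = -y := by
  rw [Affine.negY, ha1, ha3]; ring

private lemma ont_ns (A B : ℚ) {W : WeierstrassCurve.Affine ℚ}
    (ha1 : W.a₁ = 0) (ha2 : W.a₂ = 0) (ha3 : W.a₃ = 0) (ha4 : W.a₄ = A) (ha6 : W.a₆ = B)
    {x y : ℚ} (heq : y ^ 2 = x ^ 3 + A * x + B) (hy : y ≠ 0) : W.Nonsingular x y := by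
  rw [Affine.nonsingular_iff, Affine.equation_iff, ha1, ha2, ha3, ha4, ha6]
  refine ⟨by linear_combination heq, Or.inr ?_⟩
  intro hc
  exact hy (by linear_combination hc / 2)

/-- chord addition -/
private lemma ont_chord (A B : ℚ) {W : WeierstrassCurve.Affine ℚ}
    (ha1 : W.a₁ = 0) (ha2 : W.a₂ = 0) (ha3 : W.a₃ = 0) (ha4 : W.a₄ = A) (ha6 : W.a₆ = B)
    {x₁ y₁ x₂ y₂ x₃ y₃ : ℚ}
    (h₁ : W.Nonsingular x₁ y₁) (h₂ : W.Nonsingular x₂ y₂) (h₃ : W.Nonsingular x₃ y₃)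
    (hx : x₁ ≠ x₂)
    (hX : (y₁ - y₂) ^ 2 = (x₃ + x₁ + x₂) * (x₁ - x₂) ^ 2)
    (hY : y₃ * (x₁ - x₂) = -((y₁ - y₂) * (x₃ - x₁) + y₁ * (x₁ - x₂))) :
    Point.some _ _ h₁ + Point.some _ _ h₂ = Point.some _ _ h₃ := by
  rw [Point.add_of_X_ne hx]
  have hd : x₁ - x₂ ≠ 0 := sub_ne_zero.mpr hx
  have hxc : W.addX x₁ x₂ (W.slope x₁ x₂ y₁ y₂) = x₃ := by
    rw [Affine.slope_of_X_ne hx, Affine.addX, ha1, ha2]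
    field_simp
    linear_combination hX
  have hyc : W.addY x₁ x₂ y₁ (W.slope x₁ x₂ y₁ y₂) = y₃ := by
    rw [Affine.addY, Affine.negAddY, hxc, Affine.negY, ha1, ha3, Affine.slope_of_X_ne hx]
    field_simp
    linear_combination -hY
  exact ont_some_eq _ _ hxc hyc

/-- tangent addition -/
private lemma ont_tangent (A B : ℚ) {W : WeierstrassCurve.Affine ℚ}
    (ha1 : W.a₁ = 0) (ha2 : W.a₂ = 0) (ha3 : W.a₃ = 0) (ha4 : W.a₄ = A) (ha6 : W.a₆ = B)
    {x₁ y₁ x₃ y₃ : ℚ}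
    (h₁ : W.Nonsingular x₁ y₁) (h₃ : W.Nonsingular x₃ y₃)
    (hy1 : y₁ ≠ 0)
    (hX : (3 * x₁ ^ 2 + A) ^ 2 = (x₃ + 2 * x₁) * (2 * y₁) ^ 2)
    (hY : y₃ * (2 * y₁) = -((3 * x₁ ^ 2 + A) * (x₃ - x₁) + y₁ * (2 * y₁))) :
    Point.some _ _ h₁ + Point.some _ _ h₁ = Point.some _ _ h₃ := by
  have hy' : y₁ ≠ W.negY x₁ y₁ := by
    rw [ont_negY A B ha1 ha3]
    intro hc; exact hy1 (by linarith)
  rw [Point.add_self_of_Y_ne hy']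
  have hden : y₁ - W.negY x₁ y₁ = 2 * y₁ := by rw [ont_negY A B ha1 ha3]; ring
  have h2y : (2 : ℚ) * y₁ ≠ 0 := by
    intro hc; exact hy1 (by linarith)
  have hxc : W.addX x₁ x₁ (W.slope x₁ x₁ y₁ y₁) = x₃ := by
    rw [Affine.slope_of_Y_ne rfl hy', Affine.addX, ha1, ha2, ha4, hden]
    field_simp
    linear_combination hX
  have hyc : W.addY x₁ x₁ y₁ (W.slope x₁ x₁ y₁ y₁) = y₃ := by
    rw [Affine.addY, Affine.negAddY, hxc, Affine.negY, ha1, ha3,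
      Affine.slope_of_Y_ne rfl hy', ha1, ha2, ha4, hden]
    field_simp
    linear_combination -hY
  exact ont_some_eq _ _ hxc hyc

/-- a rational point killed by 3 has x-coordinate a root of the 3-division polynomial -/
private lemma ont_psi (A B : ℚ) {W : WeierstrassCurve.Affine ℚ}
    (ha1 : W.a₁ = 0) (ha2 : W.a₂ = 0) (ha3 : W.a₃ = 0) (ha4 : W.a₄ = A) (ha6 : W.a₆ = B)
    {x y : ℚ} (h : W.Nonsingular x y)
    (h3 : Point.some _ _ h + Point.some _ _ h + Point.some _ _ h = 0) :
    3 * x ^ 4 + 6 * A * x ^ 2 + 12 * B * x - A ^ 2 = 0 := by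
  have heq : y ^ 2 = x ^ 3 + A * x + B := by
    have h' := h.1
    rw [Affine.equation_iff, ha1, ha2, ha3, ha4, ha6] at h'
    linear_combination h'
  by_cases hy : y = 0
  · exfalso
    have hyy : y = W.negY x y := by rw [ont_negY A B ha1 ha3, hy]; norm_num
    rw [Point.add_self_of_Y_eq hyy, zero_add] at h3
    exact Point.some_ne_zero h h3
  · have hy' : y ≠ W.negY x y := by
      rw [ont_negY A B ha1 ha3]
      intro hc; exact hy (by linarith)
    rw [Point.add_self_of_Y_ne hy'] at h3
    have h3' : Point.some _ _ (Affine.nonsingular_add h h fun hxy => hy' hxy.right) = -Point.some _ _ h :=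
      add_eq_zero_iff_eq_neg.mp h3
    rw [Point.neg_some] at h3'
    have hx := (ont_xy_eq h3').1
    rw [Affine.slope_of_Y_ne rfl hy', Affine.addX, ha1, ha2, ha4,
      ont_negY A B ha1 ha3] at hx
    have h2y : y + y ≠ 0 := by intro hc; exact hy (by linarith)
    field_simp at hx
    linear_combination -hx - 12 * x * heq

/-- a quartic 3·x⁴+6A·x²+12B·x−A² with four distinct rational roots forces 4A³+27B²=0 -/
private lemma ont_quartic {A B r1 r2 r3 r4 : ℚ}
    (h1 : 3 * r1 ^ 4 + 6 * A * r1 ^ 2 + 12 * B * r1 - A ^ 2 = 0)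
    (h2 : 3 * r2 ^ 4 + 6 * A * r2 ^ 2 + 12 * B * r2 - A ^ 2 = 0)
    (h3 : 3 * r3 ^ 4 + 6 * A * r3 ^ 2 + 12 * B * r3 - A ^ 2 = 0)
    (h4 : 3 * r4 ^ 4 + 6 * A * r4 ^ 2 + 12 * B * r4 - A ^ 2 = 0)
    (h12 : r1 ≠ r2) (h13 : r1 ≠ r3) (h14 : r1 ≠ r4)
    (h23 : r2 ≠ r3) (h24 : r2 ≠ r4) (h34 : r3 ≠ r4) :
    4 * A ^ 3 + 27 * B ^ 2 = 0 := by
  have d12 : 3 * (r1^3 + r1^2*r2 + r1*r2^2 + r2^3) + 6*A*(r1+r2) + 12*B = 0 := by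
    apply mul_left_cancel₀ (sub_ne_zero.mpr h12)
    linear_combination h1 - h2
  have d13 : 3 * (r1^3 + r1^2*r3 + r1*r3^2 + r3^3) + 6*A*(r1+r3) + 12*B = 0 := by
    apply mul_left_cancel₀ (sub_ne_zero.mpr h13)
    linear_combination h1 - h3
  have d14 : 3 * (r1^3 + r1^2*r4 + r1*r4^2 + r4^3) + 6*A*(r1+r4) + 12*B = 0 := by
    apply mul_left_cancel₀ (sub_ne_zero.mpr h14)
    linear_combination h1 - h4
  have e123 : 3 * (r1^2 + r2^2 + r3^2 + r1*r2 + r1*r3 + r2*r3) + 6*A = 0 := by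
    apply mul_left_cancel₀ (sub_ne_zero.mpr h23)
    linear_combination d12 - d13
  have e124 : 3 * (r1^2 + r2^2 + r4^2 + r1*r2 + r1*r4 + r2*r4) + 6*A = 0 := by
    apply mul_left_cancel₀ (sub_ne_zero.mpr h24)
    linear_combination d12 - d14
  have s0 : r1 + r2 + r3 + r4 = 0 := by
    apply mul_left_cancel₀ (sub_ne_zero.mpr h34)
    linear_combination (1/3 : ℚ) * (e123 - e124)
  have hr4 : r4 = -r1 - r2 - r3 := by linarith
  subst hr4
  have hA' : A = -(r1^2 + r2^2 + r3^2 + r1*r2 + r1*r3 + r2*r3)/2 := by linarith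
  have hB' : B = -(r1^3 + r1^2*r2 + r1*r2^2 + r2^3)/4
      + (r1^2 + r2^2 + r3^2 + r1*r2 + r1*r3 + r2*r3)*(r1+r2)/4 := by
    linear_combination (1/12 : ℚ) * d12 - ((r1+r2)/12) * e123
  rw [hA', hB'] at h1 ⊢
  have key : 27 * ((r1-r2)*(r1-r3)*(r1-(-r1-r2-r3))*(r2-r3)*(r2-(-r1-r2-r3))*(r3-(-r1-r2-r3))) ^ 2
      + 256 * (4 * (-(r1^2 + r2^2 + r3^2 + r1*r2 + r1*r3 + r2*r3)/2) ^ 3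
        + 27 * (-(r1^3 + r1^2*r2 + r1*r2^2 + r2^3)/4
          + (r1^2 + r2^2 + r3^2 + r1*r2 + r1*r3 + r2*r3)*(r1+r2)/4) ^ 2) ^ 2 = 0 := by
    linear_combination ((-256)*r1^8 + (-1024)*r1^7*r2^1 + (-1024)*r1^7*r3^1 + (-1264)*r1^6*r2^2 + (-2848)*r1^6*r2^1*r3^1 + (-1264)*r1^6*r3^2 + (-208)*r1^5*r2^3 + (-1584)*r1^5*r2^2*r3^1 + (-1584)*r1^5*r2^1*r3^2 + (-208)*r1^5*r3^3 + (320)*r1^4*r2^4 + (2000)*r1^4*r2^3*r3^1 + (2208)*r1^4*r2^2*r3^2 + (2000)*r1^4*r2^1*r3^3 + (320)*r1^4*r3^4 + (-208)*r1^3*r2^5 + (2000)*r1^3*r2^4*r3^1 + (4736)*r1^3*r2^3*r3^2 + (4736)*r1^3*r2^2*r3^3 + (2000)*r1^3*r2^1*r3^4 + (-208)*r1^3*r3^5 + (-1264)*r1^2*r2^6 + (-1584)*r1^2*r2^5*r3^1 + (2208)*r1^2*r2^4*r3^2 + (4736)*r1^2*r2^3*r3^3 + (2208)*r1^2*r2^2*r3^4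 + (-1584)*r1^2*r2^1*r3^5 + (-1264)*r1^2*r3^6 + (-1024)*r1^1*r2^7 + (-2848)*r1^1*r2^6*r3^1 + (-1584)*r1^1*r2^5*r3^2 + (2000)*r1^1*r2^4*r3^3 + (2000)*r1^1*r2^3*r3^4 + (-1584)*r1^1*r2^2*r3^5 + (-2848)*r1^1*r2^1*r3^6 + (-1024)*r1^1*r3^7 + (-256)*r2^8 + (-1024)*r2^7*r3^1 + (-1264)*r2^6*r3^2 + (-208)*r2^5*r3^3 + (320)*r2^4*r3^4 + (-208)*r2^3*r3^5 + (-1264)*r2^2*r3^6 + (-1024)*r2^1*r3^7 + (-256)*r3^8) * h1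
  have hle : (4 * (-(r1^2 + r2^2 + r3^2 + r1*r2 + r1*r3 + r2*r3)/2) ^ 3
      + 27 * (-(r1^3 + r1^2*r2 + r1*r2^2 + r2^3)/4
        + (r1^2 + r2^2 + r3^2 + r1*r2 + r1*r3 + r2*r3)*(r1+r2)/4) ^ 2) ^ 2 ≤ 0 := by
    nlinarith [sq_nonneg ((r1-r2)*(r1-r3)*(r1-(-r1-r2-r3))*(r2-r3)*(r2-(-r1-r2-r3))*(r3-(-r1-r2-r3)))]
  have h0 := le_antisymm hle (sq_nonneg _)
  exact pow_eq_zero_iff two_ne_zero |>.mp h0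




private lemma ont_three {G : Type*} [AddCommGroup G] (x : G) : (3 : ℕ) • x = x + x + x := by
  rw [show (3:ℕ) = 2 + 1 from rfl, add_nsmul, two_nsmul, one_nsmul]

end OrderNineAux

open WeierstrassCurve Affine Affine.Point in
theorem order_nine_points (p q : ℤ) (hp : p ≠ 0) (hq : q ≠ 0) (hpq : p ≠ q)
    (k : ℚ) (hk : k = 1 ∨ k = 1 / 3) (A B : ℚ)
    (hA : A = -27 * k ^ 4 * ((q : ℚ) ^ 3 - 3 * p ^ 2 * q + p ^ 3) *
      ((q : ℚ) ^ 9 - 9 * q ^ 7 * p ^ 2 + 27 * q ^ 6 * p ^ 3 - 45 * q ^ 5 * p ^ 4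
        + 54 * q ^ 4 * p ^ 5 - 48 * q ^ 3 * p ^ 6 + 27 * p ^ 7 * q ^ 2
        - 9 * p ^ 8 * q + p ^ 9))
    (hB : B = 54 * k ^ 6 * ((p : ℚ) ^ 18 - 18 * p ^ 17 * q + 135 * p ^ 16 * q ^ 2
      - 570 * p ^ 15 * q ^ 3 + 1557 * p ^ 14 * q ^ 4 - 2970 * p ^ 13 * q ^ 5
      + 4128 * p ^ 12 * q ^ 6 - 4230 * p ^ 11 * q ^ 7 + 3240 * p ^ 10 * q ^ 8
      - 2032 * p ^ 9 * q ^ 9 + 1359 * p ^ 8 * q ^ 10 - 1080 * p ^ 7 * q ^ 11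
      + 735 * p ^ 6 * q ^ 12 - 306 * p ^ 5 * q ^ 13 + 27 * p ^ 4 * q ^ 14
      + 42 * p ^ 3 * q ^ 15 - 18 * p ^ 2 * q ^ 16 + q ^ 18))
    (hΔ : 4 * A ^ 3 + 27 * B ^ 2 ≠ 0)
    (W : WeierstrassCurve.Affine ℚ) (hW : W = ⟨0, 0, 0, A, B⟩) :
    ∀ P : W.Point, addOrderOf P = 9 ↔
      ∃ (x y : ℚ) (h : W.Nonsingular x y), P = .some x y h ∧
        ((x = 3 * k ^ 2 * ((p : ℚ) ^ 6 + 6 * p ^ 5 * q - 15 * p ^ 4 * q ^ 2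
              + 14 * p ^ 3 * q ^ 3 - 6 * p ^ 2 * q ^ 4 + q ^ 6) ∧
            (y = 108 * k ^ 3 * p ^ 4 * q *
                ((p : ℚ) ^ 4 - 3 * p ^ 3 * q + 4 * p ^ 2 * q ^ 2 - 3 * p * q ^ 3 + q ^ 4) ∨
             y = -(108 * k ^ 3 * p ^ 4 * q *
                ((p : ℚ) ^ 4 - 3 * p ^ 3 * q + 4 * p ^ 2 * q ^ 2 - 3 * p * q ^ 3 + q ^ 4)))) ∨
         (x = 3 * k ^ 2 * ((p : ℚ) ^ 6 - 6 * p ^ 5 * q + 21 * p ^ 4 * q ^ 2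
              - 34 * p ^ 3 * q ^ 3 + 30 * p ^ 2 * q ^ 4 - 12 * p * q ^ 5 + q ^ 6) ∧
            (y = 108 * k ^ 3 * p * q ^ 2 *
                ((p : ℚ) ^ 6 - 5 * p ^ 5 * q + 11 * p ^ 4 * q ^ 2 - 14 * p ^ 3 * q ^ 3
                  + 11 * p ^ 2 * q ^ 4 - 5 * p * q ^ 5 + q ^ 6) ∨
             y = -(108 * k ^ 3 * p * q ^ 2 *
                ((p : ℚ) ^ 6 - 5 * p ^ 5 * q + 11 * p ^ 4 * q ^ 2 - 14 * p ^ 3 * q ^ 3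
                  + 11 * p ^ 2 * q ^ 4 - 5 * p * q ^ 5 + q ^ 6)))) ∨
         (x = 3 * k ^ 2 * ((p : ℚ) ^ 6 - 6 * p ^ 5 * q + 9 * p ^ 4 * q ^ 2
              - 10 * p ^ 3 * q ^ 3 + 6 * p ^ 2 * q ^ 4 + q ^ 6) ∧
            (y = 108 * k ^ 3 * p ^ 2 * q ^ 4 *
                ((p : ℚ) ^ 3 - 2 * p ^ 2 * q + 2 * p * q ^ 2 - q ^ 3) ∨
             y = -(108 * k ^ 3 * p ^ 2 * q ^ 4 *
                ((p : ℚ) ^ 3 - 2 * p ^ 2 * q + 2 * p * q ^ 2 - q ^ 3))))) := by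
  intro P
  have hk0 : k ≠ 0 := by rcases hk with h | h <;> rw [h] <;> norm_num
  have hp' : (p : ℚ) ≠ 0 := Int.cast_ne_zero.mpr hp
  have hq' : (q : ℚ) ≠ 0 := Int.cast_ne_zero.mpr hq
  have hpmq : (p : ℚ) - q ≠ 0 := sub_ne_zero.mpr (by exact_mod_cast hpq)
  have hq2 : (0 : ℚ) < (q : ℚ) ^ 2 := by rcases hq'.lt_or_gt with h | h <;> nlinarith
  have hquadne : (p : ℚ) ^ 2 - p * q + q ^ 2 ≠ 0 := by
    have : (0:ℚ) < (p : ℚ) ^ 2 - p * q + q ^ 2 := by nlinarith [sq_nonneg (2 * (p:ℚ) - q)]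
    exact this.ne'
  have ha1 : W.a₁ = 0 := by rw [hW]
  have ha2 : W.a₂ = 0 := by rw [hW]
  have ha3 : W.a₃ = 0 := by rw [hW]
  have ha4 : W.a₄ = A := by rw [hW]
  have ha6 : W.a₆ = B := by rw [hW]
  obtain ⟨x1, hx1d⟩ : ∃ t : ℚ, t = 3 * k ^ 2 * ((p : ℚ) ^ 6 + 6 * p ^ 5 * q
      - 15 * p ^ 4 * q ^ 2 + 14 * p ^ 3 * q ^ 3 - 6 * p ^ 2 * q ^ 4 + q ^ 6) := ⟨_, rfl⟩
  obtain ⟨y1, hy1d⟩ : ∃ t : ℚ, t = 108 * k ^ 3 * p ^ 4 * q *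
      ((p : ℚ) ^ 4 - 3 * p ^ 3 * q + 4 * p ^ 2 * q ^ 2 - 3 * p * q ^ 3 + q ^ 4) := ⟨_, rfl⟩
  obtain ⟨x2, hx2d⟩ : ∃ t : ℚ, t = 3 * k ^ 2 * ((p : ℚ) ^ 6 - 6 * p ^ 5 * q
      + 21 * p ^ 4 * q ^ 2 - 34 * p ^ 3 * q ^ 3 + 30 * p ^ 2 * q ^ 4 - 12 * p * q ^ 5
      + q ^ 6) := ⟨_, rfl⟩
  obtain ⟨y2, hy2d⟩ : ∃ t : ℚ, t = 108 * k ^ 3 * p * q ^ 2 *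
      ((p : ℚ) ^ 6 - 5 * p ^ 5 * q + 11 * p ^ 4 * q ^ 2 - 14 * p ^ 3 * q ^ 3
        + 11 * p ^ 2 * q ^ 4 - 5 * p * q ^ 5 + q ^ 6) := ⟨_, rfl⟩
  obtain ⟨x4, hx4d⟩ : ∃ t : ℚ, t = 3 * k ^ 2 * ((p : ℚ) ^ 6 - 6 * p ^ 5 * q
      + 9 * p ^ 4 * q ^ 2 - 10 * p ^ 3 * q ^ 3 + 6 * p ^ 2 * q ^ 4 + q ^ 6) := ⟨_, rfl⟩
  obtain ⟨y4, hy4d⟩ : ∃ t : ℚ, t = 108 * k ^ 3 * p ^ 2 * q ^ 4 *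
      ((p : ℚ) ^ 3 - 2 * p ^ 2 * q + 2 * p * q ^ 2 - q ^ 3) := ⟨_, rfl⟩
  obtain ⟨x3, hx3d⟩ : ∃ t : ℚ, t = 3 * k ^ 2 * ((p : ℚ) ^ 6 - 6 * p ^ 5 * q
      + 9 * p ^ 4 * q ^ 2 + 2 * p ^ 3 * q ^ 3 - 6 * p ^ 2 * q ^ 4 + q ^ 6) := ⟨_, rfl⟩
  obtain ⟨y3, hy3d⟩ : ∃ t : ℚ, t = 108 * k ^ 3 * (p : ℚ) ^ 3 * q ^ 3 * ((p : ℚ) - q) ^ 3 :=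
    ⟨_, rfl⟩
  -- nonvanishing of the y-coordinates
  have hy1ne : y1 ≠ 0 := by
    have e : y1 = 108 * k ^ 3 * (p : ℚ) ^ 4 * q *
        (((p : ℚ) - q) ^ 2 * ((p : ℚ) ^ 2 - p * q + q ^ 2)) := by rw [hy1d]; ring
    rw [e]
    exact mul_ne_zero (mul_ne_zero (mul_ne_zero (mul_ne_zero (by norm_num)
      (pow_ne_zero 3 hk0)) (pow_ne_zero 4 hp')) hq')
      (mul_ne_zero (pow_ne_zero 2 hpmq) hquadne)
  have hy2ne : y2 ≠ 0 := by
    have e : y2 = 108 * k ^ 3 * (p : ℚ) * q ^ 2 *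
        (((p : ℚ) - q) ^ 4 * ((p : ℚ) ^ 2 - p * q + q ^ 2)) := by rw [hy2d]; ring
    rw [e]
    exact mul_ne_zero (mul_ne_zero (mul_ne_zero (mul_ne_zero (by norm_num)
      (pow_ne_zero 3 hk0)) hp') (pow_ne_zero 2 hq'))
      (mul_ne_zero (pow_ne_zero 4 hpmq) hquadne)
  have hy4ne : y4 ≠ 0 := by
    have e : y4 = 108 * k ^ 3 * (p : ℚ) ^ 2 * q ^ 4 *
        (((p : ℚ) - q) * ((p : ℚ) ^ 2 - p * q + q ^ 2)) := by rw [hy4d]; ring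
    rw [e]
    exact mul_ne_zero (mul_ne_zero (mul_ne_zero (mul_ne_zero (by norm_num)
      (pow_ne_zero 3 hk0)) (pow_ne_zero 2 hp')) (pow_ne_zero 4 hq'))
      (mul_ne_zero hpmq hquadne)
  have hy3ne : y3 ≠ 0 := by
    rw [hy3d]
    exact mul_ne_zero (mul_ne_zero (mul_ne_zero (mul_ne_zero (by norm_num)
      (pow_ne_zero 3 hk0)) (pow_ne_zero 3 hp')) (pow_ne_zero 3 hq')) (pow_ne_zero 3 hpmq)
  -- nonsingularity of the points
  have hN1 : W.Nonsingular x1 y1 :=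
    ont_ns A B ha1 ha2 ha3 ha4 ha6 (by rw [hx1d, hy1d, hA, hB]; ring) hy1ne
  have hN1' : W.Nonsingular x1 (-y1) :=
    ont_ns A B ha1 ha2 ha3 ha4 ha6 (by rw [hx1d, hy1d, hA, hB]; ring) (neg_ne_zero.mpr hy1ne)
  have hN2 : W.Nonsingular x2 y2 :=
    ont_ns A B ha1 ha2 ha3 ha4 ha6 (by rw [hx2d, hy2d, hA, hB]; ring) hy2ne
  have hN2' : W.Nonsingular x2 (-y2) :=
    ont_ns A B ha1 ha2 ha3 ha4 ha6 (by rw [hx2d, hy2d, hA, hB]; ring) (neg_ne_zero.mpr hy2ne)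
  have hN4 : W.Nonsingular x4 y4 :=
    ont_ns A B ha1 ha2 ha3 ha4 ha6 (by rw [hx4d, hy4d, hA, hB]; ring) hy4ne
  have hN4' : W.Nonsingular x4 (-y4) :=
    ont_ns A B ha1 ha2 ha3 ha4 ha6 (by rw [hx4d, hy4d, hA, hB]; ring) (neg_ne_zero.mpr hy4ne)
  have hN3 : W.Nonsingular x3 y3 :=
    ont_ns A B ha1 ha2 ha3 ha4 ha6 (by rw [hx3d, hy3d, hA, hB]; ring) hy3ne
  have hN3' : W.Nonsingular x3 (-y3) :=
    ont_ns A B ha1 ha2 ha3 ha4 ha6 (by rw [hx3d, hy3d, hA, hB]; ring) (neg_ne_zero.mpr hy3ne)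
  -- x-coordinate distinctions
  have hx12 : x1 ≠ x2 := by
    refine sub_ne_zero.mp ?_
    have e : x1 - x2 = 36 * k ^ 2 * (p : ℚ) * q * (((p : ℚ) - q) ^ 2 *
        ((p : ℚ) ^ 2 - p * q + q ^ 2)) := by rw [hx1d, hx2d]; ring
    rw [e]
    exact mul_ne_zero (mul_ne_zero (mul_ne_zero (mul_ne_zero (by norm_num)
      (pow_ne_zero 2 hk0)) hp') hq') (mul_ne_zero (pow_ne_zero 2 hpmq) hquadne)
  have hx14 : x1 ≠ x4 := by
    refine sub_ne_zero.mp ?_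
    have e : x1 - x4 = 36 * k ^ 2 * (p : ℚ) ^ 2 * q * (((p : ℚ) - q) *
        ((p : ℚ) ^ 2 - p * q + q ^ 2)) := by rw [hx1d, hx4d]; ring
    rw [e]
    exact mul_ne_zero (mul_ne_zero (mul_ne_zero (mul_ne_zero (by norm_num)
      (pow_ne_zero 2 hk0)) (pow_ne_zero 2 hp')) hq') (mul_ne_zero hpmq hquadne)
  have hx42 : x4 ≠ x2 := by
    refine sub_ne_zero.mp ?_
    have e : x4 - x2 = -36 * k ^ 2 * (p : ℚ) * q ^ 2 * (((p : ℚ) - q) *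
        ((p : ℚ) ^ 2 - p * q + q ^ 2)) := by rw [hx4d, hx2d]; ring
    rw [e]
    exact mul_ne_zero (mul_ne_zero (mul_ne_zero (mul_ne_zero (by norm_num)
      (pow_ne_zero 2 hk0)) hp') (pow_ne_zero 2 hq')) (mul_ne_zero hpmq hquadne)
  have hx13 : x1 ≠ x3 := by
    refine sub_ne_zero.mp ?_
    have e : x1 - x3 = 36 * k ^ 2 * (p : ℚ) ^ 3 * q * ((p : ℚ) - q) ^ 2 := by
      rw [hx1d, hx3d]; ring
    rw [e]
    exact mul_ne_zero (mul_ne_zero (mul_ne_zero (mul_ne_zero (by norm_num)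
      (pow_ne_zero 2 hk0)) (pow_ne_zero 3 hp')) hq') (pow_ne_zero 2 hpmq)
  -- negation facts
  have hneg1 : -Point.some _ _ hN1 = Point.some _ _ hN1' := by
    rw [Point.neg_some]
    exact ont_some_eq _ _ rfl (ont_negY A B ha1 ha3 x1 y1)
  have hneg2 : -Point.some _ _ hN2 = Point.some _ _ hN2' := by
    rw [Point.neg_some]
    exact ont_some_eq _ _ rfl (ont_negY A B ha1 ha3 x2 y2)
  have hneg2' : -Point.some _ _ hN2' = Point.some _ _ hN2 := by
    rw [Point.neg_some]
    refine ont_some_eq _ _ rfl ?_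
    rw [ont_negY A B ha1 ha3]; ring
  have hneg4 : -Point.some _ _ hN4 = Point.some _ _ hN4' := by
    rw [Point.neg_some]
    exact ont_some_eq _ _ rfl (ont_negY A B ha1 ha3 x4 y4)
  have hneg3 : -Point.some _ _ hN3 = Point.some _ _ hN3' := by
    rw [Point.neg_some]
    exact ont_some_eq _ _ rfl (ont_negY A B ha1 ha3 x3 y3)
  have hneg3' : -Point.some _ _ hN3' = Point.some _ _ hN3 := by
    rw [Point.neg_some]
    refine ont_some_eq _ _ rfl ?_
    rw [ont_negY A B ha1 ha3]; ring
  -- the explicit additions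
  have E1 : Point.some _ _ hN1 + Point.some _ _ hN1 = Point.some _ _ hN2 :=
    ont_tangent A B ha1 ha2 ha3 ha4 ha6 hN1 hN2 hy1ne
      (by rw [hx1d, hx2d, hy1d, hA]; ring)
      (by rw [hx1d, hx2d, hy1d, hy2d, hA]; ring)
  have E2 : Point.some _ _ hN2 + Point.some _ _ hN2 = Point.some _ _ hN4 :=
    ont_tangent A B ha1 ha2 ha3 ha4 ha6 hN2 hN4 hy2ne
      (by rw [hx2d, hx4d, hy2d, hA]; ring)
      (by rw [hx2d, hx4d, hy2d, hy4d, hA]; ring)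
  have E3 : Point.some _ _ hN1 + Point.some _ _ hN2 = Point.some _ _ hN3 :=
    ont_chord A B ha1 ha2 ha3 ha4 ha6 hN1 hN2 hN3 hx12
      (by rw [hx1d, hx2d, hx3d, hy1d, hy2d]; ring)
      (by rw [hx1d, hx2d, hx3d, hy1d, hy2d, hy3d]; ring)
  have E4 : Point.some _ _ hN3 + Point.some _ _ hN3 = Point.some _ _ hN3' :=
    ont_tangent A B ha1 ha2 ha3 ha4 ha6 hN3 hN3' hy3ne
      (by rw [hx3d, hy3d, hA]; ring)
      (by rw [hx3d, hy3d, hA]; ring)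
  have E5 : Point.some _ _ hN4 + Point.some _ _ hN2 = Point.some _ _ hN3' :=
    ont_chord A B ha1 ha2 ha3 ha4 ha6 hN4 hN2 hN3' hx42
      (by rw [hx4d, hx2d, hx3d, hy4d, hy2d]; ring)
      (by rw [hx4d, hx2d, hx3d, hy4d, hy2d, hy3d]; ring)
  have E6 : Point.some _ _ hN4 + Point.some _ _ hN4 = Point.some _ _ hN1' :=
    ont_tangent A B ha1 ha2 ha3 ha4 ha6 hN4 hN1' hy4ne
      (by rw [hx4d, hx1d, hy4d, hA]; ring)
      (by rw [hx4d, hx1d, hy4d, hy1d, hA]; ring)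
  have E7 : Point.some _ _ hN1' + Point.some _ _ hN4 = Point.some _ _ hN3 :=
    ont_chord A B ha1 ha2 ha3 ha4 ha6 hN1' hN4 hN3 hx14
      (by rw [hx1d, hx4d, hx3d, hy1d, hy4d]; ring)
      (by rw [hx1d, hx4d, hx3d, hy1d, hy4d, hy3d]; ring)
  have E8 : Point.some _ _ hN1 + Point.some _ _ hN3 = Point.some _ _ hN4 :=
    ont_chord A B ha1 ha2 ha3 ha4 ha6 hN1 hN3 hN4 hx13
      (by rw [hx1d, hx3d, hx4d, hy1d, hy3d]; ring)
      (by rw [hx1d, hx3d, hx4d, hy1d, hy3d, hy4d]; ring)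
  have E9 : Point.some _ _ hN1 + Point.some _ _ hN3' = Point.some _ _ hN2' :=
    ont_chord A B ha1 ha2 ha3 ha4 ha6 hN1 hN3' hN2' hx13
      (by rw [hx1d, hx3d, hx2d, hy1d, hy3d]; ring)
      (by rw [hx1d, hx3d, hx2d, hy1d, hy3d, hy2d]; ring)
  -- torsion bookkeeping
  have hT3 : Point.some _ _ hN3 + Point.some _ _ hN3 + Point.some _ _ hN3 = 0 := by
    rw [E4, ← hneg3, neg_add_cancel]
  have hT3' : Point.some _ _ hN3' + Point.some _ _ hN3' + Point.some _ _ hN3' = 0 := by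
    rw [← hneg3]
    have e : -Point.some _ _ hN3 + -Point.some _ _ hN3 + -Point.some _ _ hN3 =
        -(Point.some _ _ hN3 + Point.some _ _ hN3 + Point.some _ _ hN3) := by abel
    rw [e, hT3, _root_.neg_zero]
  have h3P1 : (3 : ℕ) • Point.some _ _ hN1 = Point.some _ _ hN3 := by
    rw [ont_three, E1, add_comm]; exact E3
  have h3P2 : (3 : ℕ) • Point.some _ _ hN2 = Point.some _ _ hN3' := by
    rw [ont_three, E2]; exact E5
  have h3P4 : (3 : ℕ) • Point.some _ _ hN4 = Point.some _ _ hN3 := by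
    rw [ont_three, E6]; exact E7
  have h9P1 : (9 : ℕ) • Point.some _ _ hN1 = 0 := by
    rw [show (9 : ℕ) = 3 * 3 from rfl, mul_nsmul, h3P1, ont_three]; exact hT3
  have h9P2 : (9 : ℕ) • Point.some _ _ hN2 = 0 := by
    rw [show (9 : ℕ) = 3 * 3 from rfl, mul_nsmul, h3P2, ont_three]; exact hT3'
  have h9P4 : (9 : ℕ) • Point.some _ _ hN4 = 0 := by
    rw [show (9 : ℕ) = 3 * 3 from rfl, mul_nsmul, h3P4, ont_three]; exact hT3
  haveI : Fact (Nat.Prime 3) := ⟨by norm_num⟩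
  have hord1 : addOrderOf (Point.some _ _ hN1) = 9 := by
    have h1' : ¬ (3 : ℕ) ^ 1 • Point.some _ _ hN1 = 0 := by
      rw [pow_one, h3P1]; exact Point.some_ne_zero hN3
    have h2' : (3 : ℕ) ^ (1 + 1) • Point.some _ _ hN1 = 0 := by
      rw [show (3 : ℕ) ^ (1 + 1) = 9 from rfl]; exact h9P1
    have := addOrderOf_eq_prime_pow h1' h2'
    norm_num at this
    exact this
  have hord2 : addOrderOf (Point.some _ _ hN2) = 9 := by
    have h1' : ¬ (3 : ℕ) ^ 1 • Point.some _ _ hN2 = 0 := by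
      rw [pow_one, h3P2]; exact Point.some_ne_zero hN3'
    have h2' : (3 : ℕ) ^ (1 + 1) • Point.some _ _ hN2 = 0 := by
      rw [show (3 : ℕ) ^ (1 + 1) = 9 from rfl]; exact h9P2
    have := addOrderOf_eq_prime_pow h1' h2'
    norm_num at this
    exact this
  have hord4 : addOrderOf (Point.some _ _ hN4) = 9 := by
    have h1' : ¬ (3 : ℕ) ^ 1 • Point.some _ _ hN4 = 0 := by
      rw [pow_one, h3P4]; exact Point.some_ne_zero hN3
    have h2' : (3 : ℕ) ^ (1 + 1) • Point.some _ _ hN4 = 0 := by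
      rw [show (3 : ℕ) ^ (1 + 1) = 9 from rfl]; exact h9P4
    have := addOrderOf_eq_prime_pow h1' h2'
    norm_num at this
    exact this
  -- classification of rational 3-torsion
  have hpsi3c : 3 * x3 ^ 4 + 6 * A * x3 ^ 2 + 12 * B * x3 - A ^ 2 = 0 := by
    rw [hx3d, hA, hB]; ring
  have tors3 : ∀ (a b : ℚ) (hR : W.Nonsingular a b),
      Point.some _ _ hR + Point.some _ _ hR + Point.some _ _ hR = 0 →
      Point.some _ _ hR = Point.some _ _ hN3 ∨ Point.some _ _ hR = Point.some _ _ hN3' := by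
    intro a b hR h3R
    have hpsiR := ont_psi A B ha1 ha2 ha3 ha4 ha6 hR h3R
    by_cases hax : a = x3
    · rcases ont_same_x hR hN3 hax with hc | hc
      · exact Or.inl hc
      · right; rw [hc, hneg3]
    · exfalso
      have hRR : Point.some _ _ hR + Point.some _ _ hR = -Point.some _ _ hR :=
        eq_neg_of_add_eq_zero_left h3R
      have hRT : Point.some _ _ hR ≠ Point.some _ _ hN3 := fun hc => hax (ont_xy_eq hc).1
      have hRnT : Point.some _ _ hR ≠ Point.some _ _ hN3' := fun hc => hax (ont_xy_eq hc).1
      have hTnegT : Point.some _ _ hN3 ≠ Point.some _ _ hN3' := by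
        intro hc
        have := (ont_xy_eq hc).2
        exact hy3ne (by linarith)
      have hRnegR : Point.some _ _ hR ≠ -Point.some _ _ hR := by
        intro hc
        have h0 : Point.some _ _ hR + Point.some _ _ hR = 0 := by
          nth_rewrite 2 [hc]
          rw [add_neg_cancel]
        rw [h0] at hRR
        have : Point.some _ _ hR = 0 := by rw [← neg_neg (Point.some _ _ hR), ← hRR, _root_.neg_zero]
        exact Point.some_ne_zero hR this
      have hU0 : Point.some _ _ hR + Point.some _ _ hN3 ≠ 0 := by
        intro hcc
        have h' : Point.some _ _ hR = -Point.some _ _ hN3 := eq_neg_of_add_eq_zero_left hcc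
        rw [hneg3] at h'
        exact hRnT h'
      have hV0 : Point.some _ _ hR + Point.some _ _ hN3' ≠ 0 := by
        intro hcc
        have h' : Point.some _ _ hR = -Point.some _ _ hN3' := eq_neg_of_add_eq_zero_left hcc
        rw [hneg3'] at h'
        exact hRT h'
      rcases hUdef : Point.some _ _ hR + Point.some _ _ hN3 with _ | @⟨xU, yU, hU⟩
      · exact hU0 hUdef
      rcases hVdef : Point.some _ _ hR + Point.some _ _ hN3' with _ | @⟨xV, yV, hV⟩
      · exact hV0 hVdef
      have h3U : Point.some _ _ hU + Point.some _ _ hU + Point.some _ _ hU = 0 := by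
        rw [← hUdef]
        have e : Point.some _ _ hR + Point.some _ _ hN3 + (Point.some _ _ hR + Point.some _ _ hN3) +
            (Point.some _ _ hR + Point.some _ _ hN3) =
            Point.some _ _ hR + Point.some _ _ hR + Point.some _ _ hR +
              (Point.some _ _ hN3 + Point.some _ _ hN3 + Point.some _ _ hN3) := by abel
        rw [e, h3R, hT3, add_zero]
      have h3V : Point.some _ _ hV + Point.some _ _ hV + Point.some _ _ hV = 0 := by
        rw [← hVdef]
        have e : Point.some _ _ hR + Point.some _ _ hN3' + (Point.some _ _ hR + Point.some _ _ hN3') +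
            (Point.some _ _ hR + Point.some _ _ hN3') =
            Point.some _ _ hR + Point.some _ _ hR + Point.some _ _ hR +
              (Point.some _ _ hN3' + Point.some _ _ hN3' + Point.some _ _ hN3') := by abel
        rw [e, h3R, hT3', add_zero]
      have hpsiU := ont_psi A B ha1 ha2 ha3 ha4 ha6 hU h3U
      have hpsiV := ont_psi A B ha1 ha2 ha3 ha4 ha6 hV h3V
      -- pairwise distinctness of a, x3, xU, xV
      have haU : a ≠ xU := by
        intro he
        rcases ont_same_x hR hU he with hc | hc
        · rw [← hUdef] at hc
          have hT0 : Point.some _ _ hN3 = 0 := by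
            have h' := hc.symm
            calc Point.some _ _ hN3
                = Point.some _ _ hR + Point.some _ _ hN3 - Point.some _ _ hR := by abel
              _ = Point.some _ _ hR - Point.some _ _ hR := by rw [h']
              _ = 0 := sub_self _
          exact Point.some_ne_zero hN3 hT0
        · rw [← hUdef] at hc
          have h0 : Point.some _ _ hR + (Point.some _ _ hR + Point.some _ _ hN3) = 0 :=
            eq_neg_iff_add_eq_zero.mp hc
          have hTR' : Point.some _ _ hN3 = Point.some _ _ hR := by
            calc Point.some _ _ hN3
                = Point.some _ _ hR + (Point.some _ _ hR + Point.some _ _ hN3) -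
                  (Point.some _ _ hR + Point.some _ _ hR) := by abel
              _ = 0 - (Point.some _ _ hR + Point.some _ _ hR) := by rw [h0]
              _ = -(Point.some _ _ hR + Point.some _ _ hR) := by abel
              _ = -(-Point.some _ _ hR) := by rw [hRR]
              _ = Point.some _ _ hR := neg_neg _
          exact hRT hTR'.symm
      have h3U' : x3 ≠ xU := by
        intro he
        rcases ont_same_x hN3 hU he with hc | hc
        · rw [← hUdef] at hc
          have hR0 : Point.some _ _ hR = 0 := by
            calc Point.some _ _ hR
                = Point.some _ _ hR + Point.some _ _ hN3 - Point.some _ _ hN3 := by abel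
              _ = Point.some _ _ hN3 - Point.some _ _ hN3 := by rw [← hc]
              _ = 0 := sub_self _
          exact Point.some_ne_zero hR hR0
        · rw [← hUdef] at hc
          -- T = -(R + T)  ⇒  R = -(T + T) = T
          have h0 : Point.some _ _ hN3 + (Point.some _ _ hR + Point.some _ _ hN3) = 0 :=
            eq_neg_iff_add_eq_zero.mp hc
          have hTT : Point.some _ _ hN3 + Point.some _ _ hN3 = -Point.some _ _ hN3 := by
            rw [E4, ← hneg3]
          have : Point.some _ _ hR = Point.some _ _ hN3 := by
            calc Point.some _ _ hR
                = Point.some _ _ hN3 + (Point.some _ _ hR + Point.some _ _ hN3) -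
                  (Point.some _ _ hN3 + Point.some _ _ hN3) := by abel
              _ = 0 - (Point.some _ _ hN3 + Point.some _ _ hN3) := by rw [h0]
              _ = -(Point.some _ _ hN3 + Point.some _ _ hN3) := by abel
              _ = -(-Point.some _ _ hN3) := by rw [hTT]
              _ = Point.some _ _ hN3 := neg_neg _
          exact hRT this
      have haV : a ≠ xV := by
        intro he
        rcases ont_same_x hR hV he with hc | hc
        · rw [← hVdef] at hc
          have hT0 : Point.some _ _ hN3' = 0 := by
            have h' := hc.symm
            calc Point.some _ _ hN3'
                = Point.some _ _ hR + Point.some _ _ hN3' - Point.some _ _ hR := by abel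
              _ = Point.some _ _ hR - Point.some _ _ hR := by rw [h']
              _ = 0 := sub_self _
          exact Point.some_ne_zero hN3' hT0
        · rw [← hVdef] at hc
          have h0 : Point.some _ _ hR + (Point.some _ _ hR + Point.some _ _ hN3') = 0 :=
            eq_neg_iff_add_eq_zero.mp hc
          have hTR' : Point.some _ _ hN3' = Point.some _ _ hR := by
            calc Point.some _ _ hN3'
                = Point.some _ _ hR + (Point.some _ _ hR + Point.some _ _ hN3') -
                  (Point.some _ _ hR + Point.some _ _ hR) := by abel
              _ = 0 - (Point.some _ _ hR + Point.some _ _ hR) := by rw [h0]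
              _ = -(Point.some _ _ hR + Point.some _ _ hR) := by abel
              _ = -(-Point.some _ _ hR) := by rw [hRR]
              _ = Point.some _ _ hR := neg_neg _
          exact hRnT hTR'.symm
      have h3V' : x3 ≠ xV := by
        intro he
        rcases ont_same_x hN3 hV he with hc | hc
        · rw [← hVdef] at hc
          -- T = R + (-T) ⇒ R = T + T = -T
          have hTT : Point.some _ _ hN3 + Point.some _ _ hN3 = -Point.some _ _ hN3 := by
            rw [E4, ← hneg3]
          have : Point.some _ _ hR = Point.some _ _ hN3' := by
            calc Point.some _ _ hR
                = Point.some _ _ hR + Point.some _ _ hN3' + Point.some _ _ hN3 -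
                  (Point.some _ _ hN3' + Point.some _ _ hN3) := by abel
              _ = Point.some _ _ hN3 + Point.some _ _ hN3 -
                  (Point.some _ _ hN3' + Point.some _ _ hN3) := by rw [← hc]
              _ = Point.some _ _ hN3 + Point.some _ _ hN3 - 0 := by
                  rw [← hneg3, neg_add_cancel]
              _ = Point.some _ _ hN3 + Point.some _ _ hN3 := by abel
              _ = -Point.some _ _ hN3 := hTT
              _ = Point.some _ _ hN3' := hneg3
          exact hRnT this
        · rw [← hVdef] at hc
          -- T = -(R + T') ⇒ R = -T - T' = 0
          have h0 : Point.some _ _ hN3 + (Point.some _ _ hR + Point.some _ _ hN3') = 0 :=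
            eq_neg_iff_add_eq_zero.mp hc
          have hR0 : Point.some _ _ hR = 0 := by
            calc Point.some _ _ hR
                = Point.some _ _ hN3 + (Point.some _ _ hR + Point.some _ _ hN3') -
                  (Point.some _ _ hN3 + Point.some _ _ hN3') := by abel
              _ = 0 - (Point.some _ _ hN3 + Point.some _ _ hN3') := by rw [h0]
              _ = -(Point.some _ _ hN3 + Point.some _ _ hN3') := by abel
              _ = -(Point.some _ _ hN3 + -Point.some _ _ hN3) := by rw [hneg3]
              _ = -(0 : W.Point) := by rw [add_neg_cancel]
              _ = 0 := _root_.neg_zero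
          exact Point.some_ne_zero hR hR0
      have hUV : xU ≠ xV := by
        intro he
        rcases ont_same_x hU hV he with hc | hc
        · rw [← hUdef, ← hVdef] at hc
          have : Point.some _ _ hN3 = Point.some _ _ hN3' := add_left_cancel hc
          exact hTnegT this
        · rw [← hUdef, ← hVdef] at hc
          have h0 : Point.some _ _ hR + Point.some _ _ hN3 +
              (Point.some _ _ hR + Point.some _ _ hN3') = 0 := eq_neg_iff_add_eq_zero.mp hc
          have hRR0 : Point.some _ _ hR = -Point.some _ _ hR := by
            calc Point.some _ _ hR
                = Point.some _ _ hR + Point.some _ _ hN3 + (Point.some _ _ hR + Point.some _ _ hN3') -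
                  Point.some _ _ hR - (Point.some _ _ hN3 + Point.some _ _ hN3') := by abel
              _ = 0 - Point.some _ _ hR - (Point.some _ _ hN3 + Point.some _ _ hN3') := by rw [h0]
              _ = -Point.some _ _ hR - (Point.some _ _ hN3 + Point.some _ _ hN3') := by abel
              _ = -Point.some _ _ hR - (Point.some _ _ hN3 + -Point.some _ _ hN3) := by rw [hneg3]
              _ = -Point.some _ _ hR - 0 := by rw [add_neg_cancel]
              _ = -Point.some _ _ hR := by abel
          exact hRnegR hRR0
      exact hΔ (ont_quartic hpsiR hpsi3c hpsiU hpsiV hax haU haV h3U' h3V' hUV)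
  constructor
  · -- forward direction
    intro hPord
    have h9P : (9 : ℕ) • P = 0 := by rw [← hPord]; exact addOrderOf_nsmul_eq_zero P
    have h3Pne : (3 : ℕ) • P ≠ 0 := by
      intro hc
      have hdvd := addOrderOf_dvd_of_nsmul_eq_zero hc
      rw [hPord] at hdvd
      norm_num at hdvd
    have hQ3 : (3 : ℕ) • P + (3 : ℕ) • P + (3 : ℕ) • P = 0 := by
      have e : (3 : ℕ) • P + (3 : ℕ) • P + (3 : ℕ) • P = (9 : ℕ) • P := by
        rw [show (9 : ℕ) = 3 + 3 + 3 from rfl, add_nsmul, add_nsmul]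
      rw [e, h9P]
    rcases h3x : (3 : ℕ) • P with _ | @⟨xQ, yQ, hQ⟩
    · exact absurd (h3x.trans Point.zero_def.symm) h3Pne
    rw [h3x] at hQ3
    rcases tors3 xQ yQ hQ hQ3 with hcQ | hcQ
    · have key : P - Point.some _ _ hN1 + (P - Point.some _ _ hN1) + (P - Point.some _ _ hN1) = 0 := by
        have e : P - Point.some _ _ hN1 + (P - Point.some _ _ hN1) + (P - Point.some _ _ hN1) =
            (3 : ℕ) • P - (3 : ℕ) • Point.some _ _ hN1 := by
          rw [ont_three, ont_three]; abel
        rw [e, h3x, hcQ, h3P1, sub_self]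
      by_cases hz : P - Point.some _ _ hN1 = 0
      · exact ⟨x1, y1, hN1, sub_eq_zero.mp hz, Or.inl ⟨hx1d, Or.inl hy1d⟩⟩
      · rcases hsub : P - Point.some _ _ hN1 with _ | @⟨xS, yS, hS⟩
        · exact absurd hsub hz
        rw [hsub] at key
        rcases tors3 xS yS hS key with hc2 | hc2
        · have hP : P = Point.some _ _ hN4 := by
            have h' : P - Point.some _ _ hN1 = Point.some _ _ hN3 := by rw [hsub, hc2]
            have h'' : P = Point.some _ _ hN1 + Point.some _ _ hN3 := by rw [← h']; abel
            rw [h'', E8]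
          exact ⟨x4, y4, hN4, hP, Or.inr (Or.inr ⟨hx4d, Or.inl hy4d⟩)⟩
        · have hP : P = Point.some _ _ hN2' := by
            have h' : P - Point.some _ _ hN1 = Point.some _ _ hN3' := by rw [hsub, hc2]
            have h'' : P = Point.some _ _ hN1 + Point.some _ _ hN3' := by rw [← h']; abel
            rw [h'', E9]
          refine ⟨x2, -y2, hN2', hP, Or.inr (Or.inl ⟨hx2d, Or.inr ?_⟩)⟩
          rw [hy2d]
    · have key : P + Point.some _ _ hN1 + (P + Point.some _ _ hN1) + (P + Point.some _ _ hN1) = 0 := by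
        have e : P + Point.some _ _ hN1 + (P + Point.some _ _ hN1) + (P + Point.some _ _ hN1) =
            (3 : ℕ) • P + (3 : ℕ) • Point.some _ _ hN1 := by
          rw [ont_three, ont_three]; abel
        rw [e, h3x, hcQ, h3P1, ← hneg3, neg_add_cancel]
      by_cases hz : P + Point.some _ _ hN1 = 0
      · have hP : P = Point.some _ _ hN1' := by
          rw [eq_neg_of_add_eq_zero_left hz, hneg1]
        refine ⟨x1, -y1, hN1', hP, Or.inl ⟨hx1d, Or.inr ?_⟩⟩
        rw [hy1d]
      · rcases hsub : P + Point.some _ _ hN1 with _ | @⟨xS, yS, hS⟩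
        · exact absurd hsub hz
        rw [hsub] at key
        rcases tors3 xS yS hS key with hc2 | hc2
        · have hP : P = Point.some _ _ hN2 := by
            have h' : P + Point.some _ _ hN1 = Point.some _ _ hN3 := by rw [hsub, hc2]
            have h'' : P = -(Point.some _ _ hN1 + -Point.some _ _ hN3) := by rw [← h']; abel
            rw [hneg3] at h''
            rw [E9] at h''
            rw [h'', hneg2']
          exact ⟨x2, y2, hN2, hP, Or.inr (Or.inl ⟨hx2d, Or.inl hy2d⟩)⟩
        · have hP : P = Point.some _ _ hN4' := by
            have h' : P + Point.some _ _ hN1 = Point.some _ _ hN3' := by rw [hsub, hc2]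
            have h'' : P = -(Point.some _ _ hN1 + -Point.some _ _ hN3') := by rw [← h']; abel
            rw [hneg3'] at h''
            rw [E8] at h''
            rw [h'', hneg4]
          refine ⟨x4, -y4, hN4', hP, Or.inr (Or.inr ⟨hx4d, Or.inr ?_⟩)⟩
          rw [hy4d]
  · -- backward direction
    rintro ⟨x, y, h, rfl, hcase⟩
    rcases hcase with ⟨hx, hy | hy⟩ | ⟨hx, hy | hy⟩ | ⟨hx, hy | hy⟩
    · rw [ont_some_eq h hN1 (hx.trans hx1d.symm) (hy.trans hy1d.symm)]
      exact hord1
    · rw [ont_some_eq h hN1' (hx.trans hx1d.symm) (by rw [hy, hy1d]), ← hneg1, addOrderOf_neg]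
      exact hord1
    · rw [ont_some_eq h hN2 (hx.trans hx2d.symm) (hy.trans hy2d.symm)]
      exact hord2
    · rw [ont_some_eq h hN2' (hx.trans hx2d.symm) (by rw [hy, hy2d]), ← hneg2, addOrderOf_neg]
      exact hord2
    · rw [ont_some_eq h hN4 (hx.trans hx4d.symm) (hy.trans hy4d.symm)]
      exact hord4
    · rw [ont_some_eq h hN4' (hx.trans hx4d.symm) (by rw [hy, hy4d]), ← hneg4, addOrderOf_neg]
      exact hord4
end

section
/- The elliptic curve over ℚ defined by Y² = X³ − 43X + 166 has a rational point of order 7. -/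
open WeierstrassCurve

private lemma some_congr {F : Type*} [Field F] {W : WeierstrassCurve.Affine F}
    {x₁ y₁ x₂ y₂ : F} (h₁ : W.Nonsingular x₁ y₁) (h₂ : W.Nonsingular x₂ y₂)
    (hx : x₁ = x₂) (hy : y₁ = y₂) :
    WeierstrassCurve.Affine.Point.some _ _ h₁ = WeierstrassCurve.Affine.Point.some _ _ h₂ := by
  subst hx; subst hy; rfl

theorem curve_has_point_of_order_seven
    (W : WeierstrassCurve.Affine ℚ) (hW : W = ⟨0, 0, 0, -43, 166⟩) :
    ∃ P : W.Point, addOrderOf P = 7 := by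
  subst hW
  set W : WeierstrassCurve.Affine ℚ := ⟨0, 0, 0, -43, 166⟩ with hW
  have hP : W.Nonsingular 3 8 := by
    rw [Affine.nonsingular_iff, Affine.equation_iff]; norm_num [hW, Affine.negY]
  have h2 : W.Nonsingular (-5) (-16) := by
    rw [Affine.nonsingular_iff, Affine.equation_iff]; norm_num [hW, Affine.negY]
  have h3 : W.Nonsingular 11 (-32) := by
    rw [Affine.nonsingular_iff, Affine.equation_iff]; norm_num [hW, Affine.negY]
  have h4 : W.Nonsingular 11 32 := by
    rw [Affine.nonsingular_iff, Affine.equation_iff]; norm_num [hW, Affine.negY]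
  set P : W.Point := .some _ _ hP with hPdef
  have hyP : (8 : ℚ) ≠ W.negY 3 8 := by norm_num [hW, Affine.negY]
  have hy2 : (-16 : ℚ) ≠ W.negY (-5) (-16) := by norm_num [hW, Affine.negY]
  have e2 : P + P = .some _ _ h2 := by
    rw [hPdef, Affine.Point.add_self_of_Y_ne hyP]
    exact some_congr _ _ (by rw [Affine.addX, Affine.slope_of_Y_ne rfl hyP]; norm_num [hW, Affine.negY])
      (by rw [Affine.addY, Affine.negAddY, Affine.addX, Affine.slope_of_Y_ne rfl hyP]; norm_num [hW, Affine.negY])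
  have e3 : Affine.Point.some _ _ h2 + P = .some _ _ h3 := by
    rw [hPdef, Affine.Point.add_of_X_ne (by norm_num : (-5 : ℚ) ≠ 3)]
    exact some_congr _ _
      (by rw [Affine.addX, Affine.slope_of_X_ne (by norm_num : (-5 : ℚ) ≠ 3)]; norm_num [hW, Affine.negY])
      (by rw [Affine.addY, Affine.negAddY, Affine.addX, Affine.slope_of_X_ne (by norm_num : (-5 : ℚ) ≠ 3)]; norm_num [hW, Affine.negY])
  have e4 : Affine.Point.some _ _ h2 + .some _ _ h2 = .some _ _ h4 := by
    rw [Affine.Point.add_self_of_Y_ne hy2]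
    exact some_congr _ _
      (by rw [Affine.addX, Affine.slope_of_Y_ne rfl hy2]; norm_num [hW, Affine.negY])
      (by rw [Affine.addY, Affine.negAddY, Affine.addX, Affine.slope_of_Y_ne rfl hy2]; norm_num [hW, Affine.negY])
  have e0 : Affine.Point.some _ _ h4 + .some _ _ h3 = 0 :=
    Affine.Point.add_of_Y_eq rfl (by norm_num [hW, Affine.negY])
  have h7 : 7 • P = 0 := by
    have : 7 • P = ((P + P) + (P + P)) + ((P + P) + P) := by abel
    rw [this, e2, e3, e4, e0]
  have : Fact (Nat.Prime 7) := ⟨by norm_num⟩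
  exact ⟨P, addOrderOf_eq_prime h7 (Affine.Point.some_ne_zero hP)⟩
end

section
/- The elliptic curve over ℚ defined by Y² = X³ − 219X + 1654 has a rational point of order 9. -/
open WeierstrassCurve

private lemma point_some_eq {W : WeierstrassCurve.Affine ℚ} {x₁ y₁ x₂ y₂ : ℚ}
    (h₁ : W.Nonsingular x₁ y₁) (hx : x₁ = x₂) (hy : y₁ = y₂) (h₂ : W.Nonsingular x₂ y₂) :
    Affine.Point.some _ _ h₁ = Affine.Point.some _ _ h₂ := by
  subst hx; subst hy; rfl

theorem curve_has_point_of_order_nine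
    (W : WeierstrassCurve.Affine ℚ) (hW : W = ⟨0, 0, 0, -219, 1654⟩) :
    ∃ P : W.Point, addOrderOf P = 9 := by
  subst hW
  set W : WeierstrassCurve.Affine ℚ := ⟨0, 0, 0, -219, 1654⟩ with hWdef
  have h1 : W.Nonsingular (-13 : ℚ) 48 := by
    rw [Affine.nonsingular_iff, Affine.equation_iff]; norm_num [hWdef]
  have h2 : W.Nonsingular (35 : ℚ) (-192) := by
    rw [Affine.nonsingular_iff, Affine.equation_iff]; norm_num [hWdef]
  have h3 : W.Nonsingular (3 : ℚ) 32 := by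
    rw [Affine.nonsingular_iff, Affine.equation_iff]; norm_num [hWdef]
  have h3' : W.Nonsingular (3 : ℚ) (-32) := by
    rw [Affine.nonsingular_iff, Affine.equation_iff]; norm_num [hWdef]
  have hy1 : (48 : ℚ) ≠ W.negY (-13) 48 := by
    simp [Affine.negY, hWdef]; norm_num
  have hy3 : (32 : ℚ) ≠ W.negY 3 32 := by
    simp [Affine.negY, hWdef]; norm_num
  refine ⟨Affine.Point.some _ _ h1, ?_⟩
  -- 2 • P = (35, -192)
  have e2 : Affine.Point.some _ _ h1 + Affine.Point.some _ _ h1 = Affine.Point.some _ _ h2 := by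
    rw [Affine.Point.add_of_Y_ne hy1]
    refine point_some_eq _ ?_ ?_ h2
    · rw [Affine.slope_of_Y_ne rfl hy1]
      simp [Affine.negY, hWdef]; norm_num
    · rw [Affine.slope_of_Y_ne rfl hy1]
      simp [Affine.negY, Affine.addY, Affine.negAddY, Affine.addX, hWdef]; norm_num
  -- 3 • P = (3, 32)
  have e3 : Affine.Point.some _ _ h2 + Affine.Point.some _ _ h1 = Affine.Point.some _ _ h3 := by
    have hx : (35 : ℚ) ≠ -13 := by norm_num
    rw [Affine.Point.add_of_X_ne hx]
    refine point_some_eq _ ?_ ?_ h3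
    · rw [Affine.slope_of_X_ne hx]
      simp [Affine.negY, hWdef]; norm_num
    · rw [Affine.slope_of_X_ne hx]
      simp [Affine.negY, Affine.addY, Affine.negAddY, Affine.addX, hWdef]; norm_num
  -- 2 • Q = (3, -32) where Q = (3, 32)
  have f2 : Affine.Point.some _ _ h3 + Affine.Point.some _ _ h3 = Affine.Point.some _ _ h3' := by
    rw [Affine.Point.add_of_Y_ne hy3]
    refine point_some_eq _ ?_ ?_ h3'
    · rw [Affine.slope_of_Y_ne rfl hy3]
      simp [Affine.negY, hWdef]; norm_num
    · rw [Affine.slope_of_Y_ne rfl hy3]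
      simp [Affine.negY, Affine.addY, Affine.negAddY, Affine.addX, hWdef]; norm_num
  have f3 : Affine.Point.some _ _ h3' + Affine.Point.some _ _ h3 = 0 := by
    refine Affine.Point.add_of_Y_eq rfl ?_
    simp [Affine.negY, hWdef]
  have h3P : (3 : ℕ) • Affine.Point.some _ _ h1 = Affine.Point.some _ _ h3 := by
    rw [show (3 : ℕ) = 2 + 1 by rfl, add_smul, two_smul, one_smul, e2, e3]
  have h9P : (9 : ℕ) • Affine.Point.some _ _ h1 = 0 := by
    rw [show (9 : ℕ) = 3 * 3 by rfl, mul_smul, h3P,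
      show (3 : ℕ) = 2 + 1 by rfl, add_smul, two_smul, one_smul, f2, f3]
  have : Fact (Nat.Prime 3) := ⟨by norm_num⟩
  have hfin := addOrderOf_eq_prime_pow (p := 3) (n := 1) (x := Affine.Point.some _ _ h1)
    (by rw [pow_one, h3P]; exact fun h => Affine.Point.some_ne_zero h3 h)
    (by rw [show (3 : ℕ) ^ 2 = 9 by rfl, h9P])
  rw [hfin]; norm_num
end

section
/- For all coprime integers p, q, one has gcd(36·p·q·(p − q), 9·((p − q)·(p³ − 3p²q + 2pq² − 2q³) − q⁴)) = 9. -/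
theorem gcd_eq_nine (p q : ℤ) (h : Int.gcd p q = 1) :
    Int.gcd (36 * p * q * (p - q))
      (9 * ((p - q) * (p ^ 3 - 3 * p ^ 2 * q + 2 * p * q ^ 2 - 2 * q ^ 3) - q ^ 4)) = 9 := by
  have hpq : IsCoprime p q := Int.isCoprime_iff_gcd_eq_one.mpr h
  set b : ℤ := p ^ 4 - 4 * p ^ 3 * q + 5 * p ^ 2 * q ^ 2 - 4 * p * q ^ 3 + q ^ 4 with hb
  -- b coprime to p
  have h1 : IsCoprime b p := by
    have : IsCoprime (q ^ 4 + p * (p ^ 3 - 4 * p ^ 2 * q + 5 * p * q ^ 2 - 4 * q ^ 3)) p :=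
      (hpq.symm.pow_left).add_mul_left_left _
    have e : b = q ^ 4 + p * (p ^ 3 - 4 * p ^ 2 * q + 5 * p * q ^ 2 - 4 * q ^ 3) := by ring
    rwa [← e] at this
  -- b coprime to q
  have h2 : IsCoprime b q := by
    have : IsCoprime (p ^ 4 + q * (-4 * p ^ 3 + 5 * p ^ 2 * q - 4 * p * q ^ 2 + q ^ 3)) q :=
      (hpq.pow_left).add_mul_left_left _
    have e : b = p ^ 4 + q * (-4 * p ^ 3 + 5 * p ^ 2 * q - 4 * p * q ^ 2 + q ^ 3) := by ring
    rwa [← e] at this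
  -- b coprime to p - q
  have hq_pmq : IsCoprime q (p - q) := by
    have : IsCoprime q (p + q * (-1)) := hpq.symm.add_mul_left_right _
    have e : p - q = p + q * (-1) := by ring
    rwa [← e] at this
  have h3 : IsCoprime b (p - q) := by
    have hq4 : IsCoprime ((-(q ^ 4)) : ℤ) (p - q) := ((hq_pmq.pow_left).neg_left)
    have : IsCoprime (-(q ^ 4) + (p - q) * (p ^ 3 - 3 * p ^ 2 * q + 2 * p * q ^ 2 - 2 * q ^ 3)) (p - q) :=
      hq4.add_mul_left_left _
    have e : b = -(q ^ 4) + (p - q) * (p ^ 3 - 3 * p ^ 2 * q + 2 * p * q ^ 2 - 2 * q ^ 3) := by ring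
    rwa [← e] at this
  -- b is odd, hence coprime to 2
  have hodd : ¬ ((2:ℤ) ∣ b) := by
    intro hd
    have hb0 : ((b : ZMod 2)) = 0 := (ZMod.intCast_zmod_eq_zero_iff_dvd b 2).mpr hd
    have hnot : ¬ (((2:ℤ) ∣ p) ∧ ((2:ℤ) ∣ q)) := by
      rintro ⟨hp2, hq2⟩
      have := Int.dvd_gcd hp2 hq2
      rw [h] at this
      norm_num at this
    have hp0 : ¬ (((p : ZMod 2)) = 0 ∧ ((q : ZMod 2)) = 0) := by
      rintro ⟨hp', hq'⟩
      exact hnot ⟨(ZMod.intCast_zmod_eq_zero_iff_dvd p 2).mp hp',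
        (ZMod.intCast_zmod_eq_zero_iff_dvd q 2).mp hq'⟩
    rw [hb] at hb0
    push_cast at hb0
    revert hb0 hp0
    generalize ((p : ZMod 2)) = P
    generalize ((q : ZMod 2)) = Q
    revert P Q
    decide
  have h4 : IsCoprime b (2:ℤ) := ((Int.prime_two.coprime_iff_not_dvd).mpr hodd).symm
  have hcop : IsCoprime b (2 * 2 * p * q * (p - q)) :=
    ((((h4.mul_right h4).mul_right h1).mul_right h2).mul_right h3)
  have hg : Int.gcd (2 * 2 * p * q * (p - q)) b = 1 :=
    Int.isCoprime_iff_gcd_eq_one.mp hcop.symm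
  have e1 : 36 * p * q * (p - q) = 9 * (2 * 2 * p * q * (p - q)) := by ring
  have e2 : 9 * ((p - q) * (p ^ 3 - 3 * p ^ 2 * q + 2 * p * q ^ 2 - 2 * q ^ 3) - q ^ 4) = 9 * b := by
    rw [hb]; ring
  rw [e1, e2, Int.gcd_mul_left, hg]
  norm_num
end
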